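/- arXiv:2605.15758 — 6 statements merged into one kernel-verified Lean document; each statement's English description precedes it below -/
import Mathlib

section
/- For each odd prime p, ρ_p(K) = 1/p + O_p(1/K); that is, there exists a constant C_p > 0 depending only on p such that |ρ_p(K) − 1/p| ≤ C_p/K for all sufficiently large K. -/
open Filter Finset Real

/-- The twin prime constant `C₂ = ∏_{p>2} (1 - 1/(p-1)²)`. -/
noncomputable def twinC : ℝ :=
  ∏' p : Nat.Primes, if 2 < (p : ℕ) then (1 - 1 / (((p : ℕ) : ℝ) - 1) ^ 2) else 1

/-- The singular series `𝔖(d) = 2C₂ ∏_{p|d, p>2} (1 + 1/(p-2))`. -/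
noncomputable def singSeries (d : ℕ) : ℝ :=
  2 * twinC * ∏ p ∈ d.primeFactors.filter (fun p => 2 < p), (1 + 1 / ((p : ℝ) - 2))

/-- `K(N) = ⌊log₂ N - 2 log₂ (log N)⌋`. -/
noncomputable def Kf (N : ℕ) : ℕ :=
  ⌊Real.log N / Real.log 2 - 2 * Real.log (Real.log N) / Real.log 2⌋₊

/-- `d(k₂, h) = 2^{k₂} (2^h - 1) - h`. -/
def dd (k₂ h : ℕ) : ℕ := 2 ^ k₂ * (2 ^ h - 1) - h

/-- `Φ(N) = (1/K²) ∑_{1≤h≤K-1, h even} ∑_{1≤k₂≤K-h} 𝔖(d(k₂,h))`. -/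
noncomputable def Phi (N : ℕ) : ℝ :=
  (1 / (Kf N : ℝ) ^ 2) *
    ∑ h ∈ (Finset.Icc 1 (Kf N - 1)).filter (fun h => Even h),
      ∑ k₂ ∈ Finset.Icc 1 (Kf N - h), singSeries (dd k₂ h)

/-- The multiplicative function `g` supported on odd squarefree integers with
`g(p) = 1/(p-2)` for odd primes. -/
noncomputable def gfun (n : ℕ) : ℝ :=
  if Squarefree n ∧ Odd n then ∏ p ∈ n.primeFactors, (1 / ((p : ℝ) - 2)) else 0

/-- The Romanov-type constant `C_Rom = ∑_{β odd squarefree} g(β)/ord_β(2)`.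
(`gfun` vanishes off odd squarefree integers; `ord_β(2)` is `orderOf (2 : ZMod β)`.) -/
noncomputable def CRom : ℝ := ∑' β : ℕ, gfun β / (orderOf (2 : ZMod β) : ℝ)

/-- `R(N)`: integers `n ≤ N` with `n = m + k`, `k, m ≥ 1` and `2^k + m` prime. -/
def RSet (N : ℕ) : Set ℕ :=
  {n | n ≤ N ∧ ∃ k m : ℕ, 1 ≤ k ∧ 1 ≤ m ∧ n = m + k ∧ Nat.Prime (2 ^ k + m)}

/-- `c_k = 2^k - k`. -/
def ck (k : ℕ) : ℕ := 2 ^ k - k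

/-- `r(n) = #{1 ≤ k ≤ K : n + c_k prime}`. -/
noncomputable def rfun (N n : ℕ) : ℕ :=
  ((Finset.Icc 1 (Kf N)).filter (fun k => Nat.Prime (n + ck k))).card

/-- `S₁(N) = ∑_{K+1 ≤ n ≤ N} r(n)`. -/
noncomputable def S1 (N : ℕ) : ℕ := ∑ n ∈ Finset.Icc (Kf N + 1) N, rfun N n

/-- `S₂(N) = ∑_{K+1 ≤ n ≤ N} r(n)²`. -/
noncomputable def S2 (N : ℕ) : ℕ := ∑ n ∈ Finset.Icc (Kf N + 1) N, (rfun N n) ^ 2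

/-- The index set `I_K = {(k₂, h) : 1 ≤ h ≤ K-1, h even, 1 ≤ k₂ ≤ K-h}`. -/
def IK (K : ℕ) : Finset (ℕ × ℕ) :=
  (Finset.Icc 1 K ×ˢ Finset.Icc 1 K).filter
    (fun q => Even q.2 ∧ q.2 ≤ K - 1 ∧ q.1 ≤ K - q.2)

/-- `f(d) = ∏_{p|d, p>2} (p-1)/(p-2)`. -/
noncomputable def ffun (d : ℕ) : ℝ :=
  ∏ p ∈ d.primeFactors.filter (fun p => 2 < p), (((p : ℝ) - 1) / ((p : ℝ) - 2))

/-- `f_P(d) = ∏_{p|d, 2<p≤P} (p-1)/(p-2)`. -/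
noncomputable def fP (P d : ℕ) : ℝ :=
  ∏ p ∈ d.primeFactors.filter (fun p => 2 < p ∧ p ≤ P), (((p : ℝ) - 1) / ((p : ℝ) - 2))

/-- `D(N) = ∑_{1≤k₁,k₂≤K, k₁≠k₂} #{K+1 ≤ n ≤ N : n + c_{k₁}, n + c_{k₂} both prime}`. -/
noncomputable def DN (N : ℕ) : ℕ :=
  ∑ q ∈ (Finset.Icc 1 (Kf N) ×ˢ Finset.Icc 1 (Kf N)).filter (fun q => q.1 ≠ q.2),
    ((Finset.Icc (Kf N + 1) N).filter
      (fun n => Nat.Prime (n + ck q.1) ∧ Nat.Prime (n + ck q.2))).card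

/-- `π_d(x) = #{primes p ≤ x : p + d also prime}`. -/
noncomputable def piPairs (d : ℕ) (x : ℝ) : ℕ :=
  {p : ℕ | p.Prime ∧ (p : ℝ) ≤ x ∧ Nat.Prime (p + d)}.ncard


/-! ### Auxiliary lemmas for `equidistribution_mod_p` -/

private lemma eqd_sum_block_const (f : ℕ → ℕ) (L : ℕ) (hf : ∀ x, f (x + L) = f x) :
    ∀ b, ∑ m ∈ Finset.Ico b (b + L), f m = ∑ m ∈ Finset.range L, f m := by
  intro b
  induction b with
  | zero => rw [Finset.range_eq_Ico]; norm_num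
  | succ x ih =>
      rcases Nat.eq_zero_or_pos L with hL | hL
      · simp [hL]
      have h1 : ∑ m ∈ Finset.Ico x (x + L + 1), f m
          = (∑ m ∈ Finset.Ico x (x + L), f m) + f (x + L) :=
        Finset.sum_Ico_succ_top (by omega) f
      have h2 : ∑ m ∈ Finset.Ico x (x + L + 1), f m
          = f x + ∑ m ∈ Finset.Ico (x + 1) (x + L + 1), f m :=
        Finset.sum_eq_sum_Ico_succ_bot (by omega) f
      have h3 : x + 1 + L = x + L + 1 := by omega
      have h4 := hf x
      rw [h3]
      omega

private lemma eqd_sum_blocks (f : ℕ → ℕ) (L : ℕ) (hf : ∀ x, f (x + L) = f x) (b : ℕ) :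
    ∀ q, ∑ m ∈ Finset.Ico b (b + L * q), f m = q * ∑ m ∈ Finset.range L, f m := by
  intro q
  induction q with
  | zero => simp
  | succ q ih =>
      have e1 : b ≤ b + L * q := by omega
      have e2 : b + L * q ≤ b + L * (q + 1) := by nlinarith
      have hsplit := Finset.sum_Ico_consecutive f e1 e2
      have h5 : b + L * (q + 1) = (b + L * q) + L := by ring
      rw [← hsplit, ih, h5, eqd_sum_block_const f L hf]
      ring

private lemma eqd_sum_Icc_est (f : ℕ → ℕ) (L : ℕ) (hL : 0 < L) (hf : ∀ x, f (x + L) = f x)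
    (M : ℕ) :
    (M / L) * (∑ i ∈ Finset.range L, f i) ≤ ∑ m ∈ Finset.Icc 1 M, f m ∧
    ∑ m ∈ Finset.Icc 1 M, f m
      ≤ (M / L) * (∑ i ∈ Finset.range L, f i) + ∑ i ∈ Finset.range L, f i := by
  have hLq : L * (M / L) ≤ M := Nat.mul_div_le M L
  have hM1 : M < L * (M / L) + L := by
    have h1 := Nat.mod_lt M hL
    have h2 := Nat.div_add_mod M L
    omega
  have hIcc : Finset.Icc 1 M = Finset.Ico 1 (M + 1) := by rw [Finset.Ico_add_one_right_eq_Icc]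
  have e1 : (1 : ℕ) ≤ 1 + L * (M / L) := by omega
  have e2 : 1 + L * (M / L) ≤ M + 1 := by omega
  have hsplit := Finset.sum_Ico_consecutive f e1 e2
  have hfirst : ∑ m ∈ Finset.Ico 1 (1 + L * (M / L)), f m
      = (M / L) * ∑ i ∈ Finset.range L, f i := by
    rw [eqd_sum_blocks f L hf 1 (M / L)]
  have htail_le : ∑ m ∈ Finset.Ico (1 + L * (M / L)) (M + 1), f m
      ≤ ∑ i ∈ Finset.range L, f i := by
    calc ∑ m ∈ Finset.Ico (1 + L * (M / L)) (M + 1), f m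
        ≤ ∑ m ∈ Finset.Ico (1 + L * (M / L)) (1 + L * (M / L) + L), f m := by
          apply Finset.sum_le_sum_of_subset
          apply Finset.Ico_subset_Ico le_rfl
          omega
      _ = ∑ i ∈ Finset.range L, f i := eqd_sum_block_const f L hf _
  constructor
  · rw [hIcc, ← hsplit, hfirst]; omega
  · rw [hIcc, ← hsplit, hfirst]; omega

private lemma eqd_sum_range_mul {M : Type*} [AddCommMonoid M] (f : ℕ → M) (a b : ℕ)
    (ha : 0 < a) :
    ∑ m ∈ Finset.range (a * b), f m
      = ∑ u ∈ Finset.range a, ∑ t ∈ Finset.range b, f (u + a * t) := by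
  rw [← Finset.sum_product']
  apply Finset.sum_nbij' (i := fun m => ((m % a, m / a) : ℕ × ℕ))
    (j := fun q => q.1 + a * q.2)
  · intro m hm
    simp only [Finset.mem_range] at hm
    simp only [Finset.mem_product, Finset.mem_range]
    exact ⟨Nat.mod_lt _ ha, Nat.div_lt_of_lt_mul (by omega)⟩
  · intro q hq
    simp only [Finset.mem_product, Finset.mem_range] at hq
    simp only [Finset.mem_range]
    calc q.1 + a * q.2 < a + a * q.2 := by omega
      _ ≤ a * b := by nlinarith [hq.2]
  · intro m _; exact (Nat.mod_add_div m a)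
  · intro q hq
    simp only [Finset.mem_product, Finset.mem_range] at hq
    have h1 : (q.1 + a * q.2) % a = q.1 := by
      rw [Nat.add_mul_mod_self_left, Nat.mod_eq_of_lt hq.1]
    have h2 : (q.1 + a * q.2) / a = q.2 := by
      rw [Nat.add_mul_div_left _ _ ha, Nat.div_eq_of_lt hq.1]; omega
    ext <;> simp [h1, h2]
  · intro m _
    simp only
    rw [Nat.mod_add_div m a]

/-- The congruence condition `2^k (2^(2m) - 1) ≡ 2m (mod p)`. -/
private def Pcond (p k m : ℕ) : Prop :=
  (2 : ZMod p) ^ k * ((2 : ZMod p) ^ (2 * m) - 1) = ((2 * m : ℕ) : ZMod p)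

private instance (p k m : ℕ) : Decidable (Pcond p k m) := by
  unfold Pcond; infer_instance

/-- Number of solutions `s` modulo the order of `2`. -/
private noncomputable def nn (p m : ℕ) : ℕ :=
  ((Finset.range (orderOf (2 : ZMod p))).filter (fun s => Pcond p s m)).card

section eqdZMod
variable {p : ℕ} [Fact p.Prime]

private lemma eqd_two_ne_zero (hp2 : p ≠ 2) : (2 : ZMod p) ≠ 0 := by
  have : ((2 : ℕ) : ZMod p) ≠ 0 := by
    rw [Ne, ZMod.natCast_eq_zero_iff]
    intro h
    exact hp2 ((Nat.prime_dvd_prime_iff_eq (Fact.out) Nat.prime_two).mp h)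
  simpa using this

private lemma eqd_orderOf_two_pos (hp2 : p ≠ 2) : 0 < orderOf (2 : ZMod p) := by
  have hp1 : 1 < p := (Fact.out : p.Prime).one_lt
  have hfin : IsOfFinOrder (2 : ZMod p) := by
    rw [isOfFinOrder_iff_pow_eq_one]
    exact ⟨p - 1, by omega, ZMod.pow_card_sub_one_eq_one (eqd_two_ne_zero hp2)⟩
  exact hfin.orderOf_pos

private lemma eqd_orderOf_two_lt (hp2 : p ≠ 2) : orderOf (2 : ZMod p) < p := by
  have hp1 : 1 < p := (Fact.out : p.Prime).one_lt
  have hdvd : orderOf (2 : ZMod p) ∣ p - 1 :=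
    orderOf_dvd_of_pow_eq_one (ZMod.pow_card_sub_one_eq_one (eqd_two_ne_zero hp2))
  have := Nat.le_of_dvd (by omega) hdvd
  omega

private lemma eqd_orderOf_two_cast_ne_zero (hp2 : p ≠ 2) :
    ((orderOf (2 : ZMod p) : ℕ) : ZMod p) ≠ 0 := by
  rw [Ne, ZMod.natCast_eq_zero_iff]
  intro h
  have h1 := Nat.le_of_dvd (eqd_orderOf_two_pos hp2) h
  exact absurd h1 (by have := eqd_orderOf_two_lt hp2; omega)

private lemma eqd_nn_le (m : ℕ) : nn p m ≤ orderOf (2 : ZMod p) := by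
  rw [nn]
  exact (Finset.card_filter_le _ _).trans (by rw [Finset.card_range])

private lemma eqd_nn_period (hp2 : p ≠ 2) (m : ℕ) :
    nn p (m + orderOf (2 : ZMod p) * p) = nn p m := by
  unfold nn
  congr 1
  apply Finset.filter_congr
  intro s _
  unfold Pcond
  have h2 : ((2 * (m + orderOf (2 : ZMod p) * p) : ℕ) : ZMod p) = ((2 * m : ℕ) : ZMod p) := by
    push_cast [ZMod.natCast_self]; ring
  have h3 : (2 : ZMod p) ^ (2 * (m + orderOf (2 : ZMod p) * p)) = (2 : ZMod p) ^ (2 * m) := by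
    have h4 : 2 * (m + orderOf (2 : ZMod p) * p) = 2 * m + orderOf (2 : ZMod p) * (2 * p) := by
      ring
    have h5 : (2 : ZMod p) ^ (orderOf (2 : ZMod p) * (2 * p)) = 1 := by
      rw [pow_mul, pow_orderOf_eq_one, one_pow]
    rw [h4, pow_add, h5, mul_one]
  rw [h2, h3]

private lemma eqd_Pcond_period_k (k m : ℕ) :
    Pcond p (k + orderOf (2 : ZMod p)) m ↔ Pcond p k m := by
  unfold Pcond
  rw [pow_add, pow_orderOf_eq_one, mul_one]

private lemma eqd_cond_iff_dvd (k m : ℕ) : Pcond p k m ↔ p ∣ dd k (2 * m) := by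
  have h1 : 2 * m ≤ 2 ^ k * (2 ^ (2 * m) - 1) := by
    have h2 : 2 * m < 2 ^ (2 * m) := Nat.lt_two_pow_self
    have h3 : 1 ≤ 2 ^ k := Nat.one_le_two_pow
    calc 2 * m ≤ 2 ^ (2 * m) - 1 := by omega
      _ ≤ 2 ^ k * (2 ^ (2 * m) - 1) := Nat.le_mul_of_pos_left _ (by omega)
  have h4 : (1 : ℕ) ≤ 2 ^ (2 * m) := Nat.one_le_two_pow
  rw [dd, ← ZMod.natCast_eq_zero_iff]
  rw [Nat.cast_sub h1, Nat.cast_mul, Nat.cast_sub h4, Nat.cast_pow, Nat.cast_pow]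
  rw [Pcond]
  push_cast
  constructor
  · intro h; linear_combination h
  · intro h; linear_combination h

private lemma eqd_inner_count (hp2 : p ≠ 2) (s u : ℕ) :
    ((Finset.range p).filter
      (fun t => Pcond p s (u + orderOf (2 : ZMod p) * t))).card = 1 := by
  have hp1 : 1 < p := (Fact.out : p.Prime).one_lt
  haveI : NeZero p := ⟨by omega⟩
  set T := orderOf (2 : ZMod p) with hTdef
  have hc : (2 * (T : ZMod p)) ≠ 0 :=
    mul_ne_zero (eqd_two_ne_zero hp2) (eqd_orderOf_two_cast_ne_zero hp2)
  set R : ZMod p := (2 : ZMod p) ^ s * ((2 : ZMod p) ^ (2 * u) - 1) - 2 * (u : ZMod p) with hR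
  have key : ∀ t : ℕ, Pcond p s (u + T * t) ↔ (2 * (T : ZMod p)) * (t : ZMod p) = R := by
    intro t
    unfold Pcond
    have h1 : 2 * (u + T * t) = 2 * u + T * (2 * t) := by ring
    have h6 : (2 : ZMod p) ^ (T * (2 * t)) = 1 := by
      rw [hTdef, pow_mul, pow_orderOf_eq_one, one_pow]
    rw [h1, pow_add, h6, mul_one]
    push_cast
    constructor
    · intro h; rw [hR]; linear_combination -h
    · intro h; linear_combination -h
  rw [Finset.card_eq_one]
  refine ⟨(R * (2 * (T : ZMod p))⁻¹).val, ?_⟩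
  ext t
  simp only [Finset.mem_filter, Finset.mem_range, Finset.mem_singleton, key]
  constructor
  · rintro ⟨htp, he⟩
    have h5 : (t : ZMod p) = R * (2 * (T : ZMod p))⁻¹ :=
      (eq_mul_inv_iff_mul_eq₀ hc).mpr (by linear_combination he)
    rw [← h5, ZMod.val_cast_of_lt htp]
  · rintro rfl
    refine ⟨ZMod.val_lt _, ?_⟩
    rw [ZMod.natCast_zmod_val]
    rw [mul_comm, inv_mul_cancel_right₀ hc]

private lemma eqd_window_sum (hp2 : p ≠ 2) :
    ∑ m ∈ Finset.range (orderOf (2 : ZMod p) * p), nn p m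
      = orderOf (2 : ZMod p) * orderOf (2 : ZMod p) := by
  set T := orderOf (2 : ZMod p) with hTdef
  have hT : 0 < T := eqd_orderOf_two_pos hp2
  rw [eqd_sum_range_mul _ T p hT]
  have h1 : ∀ u t : ℕ, nn p (u + T * t)
      = ∑ s ∈ Finset.range T, if Pcond p s (u + T * t) then 1 else 0 := by
    intro u t; rw [nn, Finset.card_filter]
  simp_rw [h1]
  have h2 : ∀ u : ℕ,
      ∑ t ∈ Finset.range p, ∑ s ∈ Finset.range T, (if Pcond p s (u + T * t) then 1 else 0)
      = ∑ s ∈ Finset.range T, ∑ t ∈ Finset.range p,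
          (if Pcond p s (u + T * t) then 1 else 0) :=
    fun u => Finset.sum_comm
  simp_rw [h2]
  have h3 : ∀ u s : ℕ,
      ∑ t ∈ Finset.range p, (if Pcond p s (u + T * t) then 1 else 0) = 1 := by
    intro u s
    rw [← Finset.card_filter]
    exact eqd_inner_count hp2 s u
  simp_rw [h3]
  simp [Finset.sum_const, mul_comm]

end eqdZMod

private lemma eqd_IK_card_filter (K : ℕ) (Q : ℕ × ℕ → Prop) [DecidablePred Q] :
    ((IK K).filter Q).card
      = ∑ m ∈ Finset.Icc 1 ((K - 1) / 2),
          ((Finset.Icc 1 (K - 2 * m)).filter (fun k => Q (k, 2 * m))).card := by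
  rw [IK, Finset.filter_filter, Finset.card_filter, Finset.sum_product_right]
  have step1 : ∀ h : ℕ,
      (∑ k ∈ Finset.Icc 1 K,
        if (Even (k, h).2 ∧ (k, h).2 ≤ K - 1 ∧ (k, h).1 ≤ K - (k, h).2) ∧ Q (k, h)
          then 1 else 0)
      = if Even h ∧ h ≤ K - 1 then
          ((Finset.Icc 1 (K - h)).filter (fun k => Q (k, h))).card else 0 := by
    intro h
    by_cases hh : Even h ∧ h ≤ K - 1
    · rw [if_pos hh]
      have hset : (Finset.Icc 1 (K - h)).filter (fun k => Q (k, h))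
          = (Finset.Icc 1 K).filter (fun k => k ≤ K - h ∧ Q (k, h)) := by
        ext k
        simp only [Finset.mem_filter, Finset.mem_Icc]
        constructor
        · rintro ⟨⟨h1, h2⟩, h3⟩; exact ⟨⟨h1, by omega⟩, h2, h3⟩
        · rintro ⟨⟨h1, _⟩, h3, h4⟩; exact ⟨⟨h1, h3⟩, h4⟩
      rw [hset, Finset.card_filter]
      apply Finset.sum_congr rfl
      intro k _
      congr 1
      simp only [eq_iff_iff]
      tauto
    · rw [if_neg hh]
      apply Finset.sum_eq_zero
      intro k _
      rw [if_neg]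
      tauto
  rw [Finset.sum_congr rfl (fun h _ => step1 h), ← Finset.sum_filter]
  apply Finset.sum_nbij' (i := fun h => h / 2) (j := fun m => 2 * m)
  · intro h hmem
    simp only [Finset.mem_filter, Finset.mem_Icc] at hmem
    obtain ⟨⟨h1, h2⟩, ⟨r, hr⟩, h4⟩ := hmem
    simp only [Finset.mem_Icc]
    omega
  · intro m hmem
    simp only [Finset.mem_Icc] at hmem
    simp only [Finset.mem_filter, Finset.mem_Icc]
    exact ⟨⟨by omega, by omega⟩, even_two_mul m, by omega⟩
  · intro h hmem
    simp only [Finset.mem_filter, Finset.mem_Icc] at hmem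
    obtain ⟨⟨h1, h2⟩, ⟨r, hr⟩, h4⟩ := hmem
    omega
  · intro m _
    omega
  · intro h hmem
    simp only [Finset.mem_filter, Finset.mem_Icc] at hmem
    obtain ⟨⟨h1, h2⟩, ⟨r, hr⟩, h4⟩ := hmem
    have he : 2 * (h / 2) = h := by omega
    rw [he]

private lemma eqd_weight_swap (f : ℕ → ℕ) (M₀ : ℕ) :
    ∑ m ∈ Finset.Icc 1 M₀, (M₀ - m) * f m
      = ∑ j ∈ Finset.Icc 1 M₀, ∑ m ∈ Finset.Icc 1 (j - 1), f m := by
  have h1 : ∀ m ∈ Finset.Icc 1 M₀, (M₀ - m) * f m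
      = ∑ j ∈ Finset.Icc 1 M₀, if m < j then f m else 0 := by
    intro m hm
    simp only [Finset.mem_Icc] at hm
    rw [← Finset.sum_filter]
    have hs : (Finset.Icc 1 M₀).filter (fun j => m < j) = Finset.Icc (m + 1) M₀ := by
      ext j
      simp only [Finset.mem_filter, Finset.mem_Icc]
      omega
    rw [hs, Finset.sum_const, Nat.card_Icc, smul_eq_mul]
    congr 1
    omega
  rw [Finset.sum_congr rfl h1, Finset.sum_comm]
  apply Finset.sum_congr rfl
  intro j hj
  simp only [Finset.mem_Icc] at hj
  rw [← Finset.sum_filter]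
  apply Finset.sum_congr _ (fun x _ => rfl)
  ext m
  simp only [Finset.mem_filter, Finset.mem_Icc]
  omega

private lemma eqd_tot_formula (K : ℕ) :
    (IK K).card = ∑ m ∈ Finset.Icc 1 ((K - 1) / 2), (K - 2 * m) := by
  have h0 : (IK K).card = ((IK K).filter (fun _ => True)).card := by
    rw [Finset.filter_true]
  rw [h0, eqd_IK_card_filter K (fun _ => True)]
  apply Finset.sum_congr rfl
  intro m hm
  simp only [Finset.mem_Icc] at hm
  rw [Finset.filter_true, Nat.card_Icc]
  omega

private lemma eqd_main_bounds {p : ℕ} [Fact p.Prime] (hp2 : p ≠ 2) (K : ℕ) (hK : 2 ≤ K) :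
    p * ((IK K).filter (fun q => p ∣ dd q.1 q.2)).card
        ≤ (IK K).card + 4 * K * p * orderOf (2 : ZMod p) ∧
      (IK K).card
        ≤ p * ((IK K).filter (fun q => p ∣ dd q.1 q.2)).card
          + 4 * K * p * orderOf (2 : ZMod p) := by
  set T := orderOf (2 : ZMod p) with hTdef
  have hT : 0 < T := eqd_orderOf_two_pos hp2
  have hp1 : 1 < p := (Fact.out : p.Prime).one_lt
  set M₀ := (K - 1) / 2 with hM₀
  set cK := K - 2 * M₀ with hcKdef
  have hcK2 : cK ≤ 2 ∧ 1 ≤ cK := by omega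
  set cnt := ((IK K).filter (fun q => p ∣ dd q.1 q.2)).card with hcntdef
  set tot := (IK K).card with htotdef
  set c : ℕ → ℕ :=
    fun m => ((Finset.Icc 1 (K - 2 * m)).filter (fun k => Pcond p k m)).card with hcdef
  have hcnt : cnt = ∑ m ∈ Finset.Icc 1 M₀, c m := by
    rw [hcntdef, eqd_IK_card_filter K (fun q => p ∣ dd q.1 q.2)]
    apply Finset.sum_congr rfl
    intro m _
    congr 1
    apply Finset.filter_congr
    intro k _
    simp only [eq_iff_iff]
    exact (eqd_cond_iff_dvd k m).symm
  have htot : tot = ∑ m ∈ Finset.Icc 1 M₀, (K - 2 * m) := eqd_tot_formula K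
  -- per-line estimate
  have hline : ∀ m : ℕ, T * c m ≤ (K - 2 * m) * nn p m + T * T
      ∧ (K - 2 * m) * nn p m ≤ T * c m + T * T := by
    intro m
    set f : ℕ → ℕ := fun k => if Pcond p k m then 1 else 0 with hf
    have hper : ∀ x, f (x + T) = f x := by
      intro x
      simp only [hf]
      rw [if_congr (eqd_Pcond_period_k x m) rfl rfl]
    have hest := eqd_sum_Icc_est f T hT hper (K - 2 * m)
    have hcf : c m = ∑ k ∈ Finset.Icc 1 (K - 2 * m), f k := by
      simp only [hcdef]
      rw [Finset.card_filter]
    have hnf : nn p m = ∑ i ∈ Finset.range T, f i := by rw [nn, Finset.card_filter]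
    set a := K - 2 * m with ha
    set q := a / T with hq
    have hdm : T * q + a % T = a := by rw [hq]; exact Nat.div_add_mod a T
    have hmod : a % T < T := Nat.mod_lt a hT
    have hlow : q * nn p m ≤ c m := by rw [hcf, hnf]; exact hest.1
    have hhigh : c m ≤ q * nn p m + nn p m := by rw [hcf, hnf]; exact hest.2
    have hnn := eqd_nn_le (p := p) m
    constructor
    · calc T * c m ≤ T * (q * nn p m + nn p m) := Nat.mul_le_mul_left T hhigh
        _ = (T * q) * nn p m + T * nn p m := by ring
        _ ≤ a * nn p m + T * T := by
            have h1 : T * q ≤ a := by omega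
            exact Nat.add_le_add (Nat.mul_le_mul_right _ h1) (Nat.mul_le_mul_left T hnn)
    · calc a * nn p m = (T * q) * nn p m + (a % T) * nn p m := by
            rw [← Nat.add_mul]
            congr 1
            omega
        _ ≤ T * (q * nn p m) + T * T := by
            refine Nat.add_le_add (by rw [mul_assoc]) ?_
            exact Nat.mul_le_mul (le_of_lt hmod) hnn
        _ ≤ T * c m + T * T := Nat.add_le_add_right (Nat.mul_le_mul_left T hlow) _
  set W := ∑ m ∈ Finset.Icc 1 M₀, (K - 2 * m) * nn p m with hWdef
  have hcard : (Finset.Icc 1 M₀).card = M₀ := by rw [Nat.card_Icc]; omega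
  have X1 : T * cnt ≤ W + M₀ * (T * T) := by
    rw [hcnt, Finset.mul_sum]
    calc ∑ m ∈ Finset.Icc 1 M₀, T * c m
        ≤ ∑ m ∈ Finset.Icc 1 M₀, ((K - 2 * m) * nn p m + T * T) :=
          Finset.sum_le_sum (fun m _ => (hline m).1)
      _ = W + M₀ * (T * T) := by
          rw [Finset.sum_add_distrib, Finset.sum_const, hcard, smul_eq_mul]
  have X2 : W ≤ T * cnt + M₀ * (T * T) := by
    rw [hcnt, Finset.mul_sum]
    calc W = ∑ m ∈ Finset.Icc 1 M₀, (K - 2 * m) * nn p m := hWdef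
      _ ≤ ∑ m ∈ Finset.Icc 1 M₀, (T * c m + T * T) :=
          Finset.sum_le_sum (fun m _ => (hline m).2)
      _ = (∑ m ∈ Finset.Icc 1 M₀, T * c m) + M₀ * (T * T) := by
          rw [Finset.sum_add_distrib, Finset.sum_const, hcard, smul_eq_mul]
  set S : ℕ → ℕ := fun M => ∑ m ∈ Finset.Icc 1 M, nn p m with hSdef
  have hS : ∀ M : ℕ, M * T ≤ p * S M + p * (T * T) ∧ p * S M ≤ M * T + p * (T * T) := by
    intro M
    have hLpos : 0 < T * p := by positivity
    have hper : ∀ x, nn p (x + T * p) = nn p x := eqd_nn_period hp2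
    have hest := eqd_sum_Icc_est (nn p) (T * p) hLpos hper M
    rw [eqd_window_sum hp2] at hest
    set q := M / (T * p) with hq
    have hdm : (T * p) * q + M % (T * p) = M := by rw [hq]; exact Nat.div_add_mod M (T * p)
    have hmod : M % (T * p) < T * p := Nat.mod_lt M hLpos
    constructor
    · calc M * T = ((T * p) * q + M % (T * p)) * T := by rw [hdm]
        _ = p * (q * (T * T)) + (M % (T * p)) * T := by ring
        _ ≤ p * S M + p * (T * T) := by
            refine Nat.add_le_add (Nat.mul_le_mul_left p hest.1) ?_
            calc (M % (T * p)) * T ≤ (T * p) * T := Nat.mul_le_mul_right _ (le_of_lt hmod)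
              _ = p * (T * T) := by ring
    · calc p * S M ≤ p * (q * (T * T) + T * T) := Nat.mul_le_mul_left p hest.2
        _ = ((T * p) * q) * T + p * (T * T) := by ring
        _ ≤ M * T + p * (T * T) := by
            refine Nat.add_le_add_right (Nat.mul_le_mul_right _ ?_) _
            omega
  set A := ∑ m ∈ Finset.Icc 1 M₀, (M₀ - m) * nn p m with hAdef
  have hW : W = 2 * A + cK * S M₀ := by
    have he : ∀ m ∈ Finset.Icc 1 M₀, (K - 2 * m) * nn p m
        = 2 * ((M₀ - m) * nn p m) + cK * nn p m := by
      intro m hm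
      simp only [Finset.mem_Icc] at hm
      have h : K - 2 * m = 2 * (M₀ - m) + cK := by omega
      rw [h]
      ring
    rw [hWdef, Finset.sum_congr rfl he, Finset.sum_add_distrib]
    simp only [hAdef, hSdef]
    rw [← Finset.mul_sum, ← Finset.mul_sum]
  have hA : A = ∑ j ∈ Finset.Icc 1 M₀, S (j - 1) := eqd_weight_swap (nn p) M₀
  set B := ∑ j ∈ Finset.Icc 1 M₀, (j - 1) with hBdef
  have htot2 : tot = 2 * B + cK * M₀ := by
    rw [htot]
    have hswap := eqd_weight_swap (fun _ => 1) M₀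
    simp only [mul_one, Finset.sum_const, Nat.card_Icc, smul_eq_mul] at hswap
    have hB' : ∑ m ∈ Finset.Icc 1 M₀, (M₀ - m) = B := by
      rw [hswap, hBdef]
      exact Finset.sum_congr rfl (fun j _ => by omega)
    rw [← hB']
    have he : ∀ m ∈ Finset.Icc 1 M₀, K - 2 * m = 2 * (M₀ - m) + cK := by
      intro m hm
      simp only [Finset.mem_Icc] at hm
      omega
    rw [Finset.sum_congr rfl he, Finset.sum_add_distrib, ← Finset.mul_sum,
      Finset.sum_const, hcard, smul_eq_mul]
    ring
  have hAB1 : p * A ≤ T * B + M₀ * (p * (T * T)) := by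
    rw [hA, hBdef, Finset.mul_sum, Finset.mul_sum]
    calc ∑ j ∈ Finset.Icc 1 M₀, p * S (j - 1)
        ≤ ∑ j ∈ Finset.Icc 1 M₀, ((j - 1) * T + p * (T * T)) :=
          Finset.sum_le_sum (fun j _ => (hS (j - 1)).2)
      _ = (∑ j ∈ Finset.Icc 1 M₀, T * (j - 1)) + M₀ * (p * (T * T)) := by
          rw [Finset.sum_add_distrib, Finset.sum_const, hcard, smul_eq_mul]
          congr 1
          apply Finset.sum_congr rfl
          intro j _
          ring
  have hAB2 : T * B ≤ p * A + M₀ * (p * (T * T)) := by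
    rw [hA, hBdef, Finset.mul_sum, Finset.mul_sum]
    calc ∑ j ∈ Finset.Icc 1 M₀, T * (j - 1)
        = ∑ j ∈ Finset.Icc 1 M₀, (j - 1) * T := by
          apply Finset.sum_congr rfl
          intro j _
          ring
      _ ≤ ∑ j ∈ Finset.Icc 1 M₀, (p * S (j - 1) + p * (T * T)) :=
          Finset.sum_le_sum (fun j _ => (hS (j - 1)).1)
      _ = (∑ j ∈ Finset.Icc 1 M₀, p * S (j - 1)) + M₀ * (p * (T * T)) := by
          rw [Finset.sum_add_distrib, Finset.sum_const, hcard, smul_eq_mul]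
  obtain ⟨hS1, hS2⟩ := hS M₀
  have m1 : p * (T * cnt) ≤ p * (W + M₀ * (T * T)) := Nat.mul_le_mul_left p X1
  have m2 : p * W ≤ p * (T * cnt + M₀ * (T * T)) := Nat.mul_le_mul_left p X2
  have e1 : p * W = 2 * (p * A) + cK * (p * S M₀) := by rw [hW]; ring
  have e2 : T * tot = 2 * (T * B) + cK * (M₀ * T) := by rw [htot2]; ring
  have m3 : cK * (p * S M₀) ≤ cK * (M₀ * T + p * (T * T)) := Nat.mul_le_mul_left cK hS2
  have m4 : cK * (M₀ * T) ≤ cK * (p * S M₀ + p * (T * T)) := Nat.mul_le_mul_left cK hS1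
  have m5 : cK * (p * (T * T)) ≤ 2 * (p * (T * T)) := Nat.mul_le_mul_right _ hcK2.1
  have m6 : M₀ ≤ K := by omega
  have m7 : M₀ * (p * (T * T)) ≤ K * (p * (T * T)) := Nat.mul_le_mul_right _ m6
  have m8 : 2 * (p * (T * T)) ≤ K * (p * (T * T)) := Nat.mul_le_mul_right _ hK
  have mm3 : cK * (p * S M₀) ≤ cK * (M₀ * T) + 2 * (p * (T * T)) := by
    have hd : cK * (M₀ * T + p * (T * T)) = cK * (M₀ * T) + cK * (p * (T * T)) := by ring
    omega
  have mm4 : cK * (M₀ * T) ≤ cK * (p * S M₀) + 2 * (p * (T * T)) := by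
    have hd : cK * (p * S M₀ + p * (T * T)) = cK * (p * S M₀) + cK * (p * (T * T)) := by ring
    omega
  constructor
  · have key : T * (p * cnt) ≤ T * (tot + 4 * K * p * T) := by
      have d1 : p * (W + M₀ * (T * T)) = p * W + M₀ * (p * (T * T)) := by ring
      have d2 : T * (p * cnt) = p * (T * cnt) := by ring
      have d3 : T * (tot + 4 * K * p * T) = T * tot + 4 * (K * (p * (T * T))) := by ring
      have d4 : 2 * (p * A) ≤ 2 * (T * B) + 2 * (M₀ * (p * (T * T))) := by omega
      omega
    exact Nat.le_of_mul_le_mul_left key hT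
  · have key : T * tot ≤ T * (p * cnt + 4 * K * p * T) := by
      have d1 : p * (T * cnt + M₀ * (T * T)) = p * (T * cnt) + M₀ * (p * (T * T)) := by ring
      have d2 : T * (p * cnt + 4 * K * p * T) = p * (T * cnt) + 4 * (K * (p * (T * T))) := by
        ring
      have d4 : 2 * (T * B) ≤ 2 * (p * A) + 2 * (M₀ * (p * (T * T))) := by omega
      omega
    exact Nat.le_of_mul_le_mul_left key hT

private lemma eqd_tot_lb (K : ℕ) (hK : 32 ≤ K) : K * K ≤ 16 * (IK K).card := by
  set M₀ := (K - 1) / 2 with hM₀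
  have htot : (IK K).card = ∑ m ∈ Finset.Icc 1 M₀, (K - 2 * m) := by
    rw [hM₀]; exact eqd_tot_formula K
  have hstep : ∑ m ∈ Finset.Icc 1 M₀, (M₀ - m) ≤ ∑ m ∈ Finset.Icc 1 M₀, (K - 2 * m) := by
    apply Finset.sum_le_sum
    intro m hm
    simp only [Finset.mem_Icc] at hm
    omega
  have hswap := eqd_weight_swap (fun _ => 1) M₀
  simp only [mul_one, Finset.sum_const, Nat.card_Icc, smul_eq_mul] at hswap
  have hB : ∑ m ∈ Finset.Icc 1 M₀, (M₀ - m) = ∑ j ∈ Finset.Icc 1 M₀, (j - 1) := by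
    rw [hswap]
    exact Finset.sum_congr rfl (fun j _ => by omega)
  have hgauss : (∑ j ∈ Finset.Icc 1 M₀, (j - 1)) * 2 = M₀ * (M₀ - 1) := by
    have h1 : Finset.Icc 1 M₀ = Finset.Ico 1 (M₀ + 1) := by rw [Finset.Ico_add_one_right_eq_Icc]
    rw [h1, Finset.sum_Ico_eq_sum_range]
    have h2 : ∀ i ∈ Finset.range (M₀ + 1 - 1), (1 + i - 1) = i := by
      intro i _
      omega
    rw [Finset.sum_congr rfl h2]
    have h3 : M₀ + 1 - 1 = M₀ := by omega
    rw [h3, Finset.sum_range_id_mul_two]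
  have hM5 : 15 ≤ M₀ := by omega
  have hKM : K ≤ 2 * M₀ + 2 := by omega
  have hfin : M₀ * (M₀ - 1) ≤ 2 * (IK K).card := by omega
  obtain ⟨m1, hm1⟩ : ∃ m1, M₀ = m1 + 1 := ⟨M₀ - 1, by omega⟩
  rw [hm1] at hfin hKM hM5
  simp only [Nat.add_sub_cancel] at hfin
  nlinarith [hfin, hKM, hM5]

/-- for each odd prime `p`, `ρ_p(K) = 1/p + O_p(1/K)`. -/
theorem equidistribution_mod_p (p : ℕ) (hp : p.Prime) (hodd : Odd p) :
    ∃ C : ℝ, 0 < C ∧ ∃ K₀ : ℕ, ∀ K : ℕ, K₀ ≤ K →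
      |(((IK K).filter (fun q => p ∣ dd q.1 q.2)).card : ℝ) / ((IK K).card : ℝ)
        - 1 / (p : ℝ)| ≤ C / (K : ℝ) := by
  haveI : Fact p.Prime := ⟨hp⟩
  have hp2 : p ≠ 2 := by
    rintro rfl
    simp [Nat.odd_iff] at hodd
  set T := orderOf (2 : ZMod p) with hTdef
  have hT : 0 < T := eqd_orderOf_two_pos hp2
  refine ⟨64 * T + 1, by positivity, 32, ?_⟩
  intro K hK
  obtain ⟨hub, hlb⟩ := eqd_main_bounds hp2 K (by omega)
  have htotlb : K * K ≤ 16 * (IK K).card := eqd_tot_lb K hK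
  set cnt := ((IK K).filter (fun q => p ∣ dd q.1 q.2)).card with hcnt
  set tot := (IK K).card with htot
  have htotpos : 0 < tot := by nlinarith
  have hKR : (0 : ℝ) < K := by
    have : (0 : ℕ) < K := by omega
    exact_mod_cast this
  have hpR : (0 : ℝ) < p := by
    have : 0 < p := hp.pos
    exact_mod_cast this
  have htotR : (0 : ℝ) < tot := by exact_mod_cast htotpos
  have hTR : (0 : ℝ) ≤ T := by positivity
  have hub' : (p : ℝ) * cnt ≤ tot + 4 * K * p * T := by exact_mod_cast hub
  have hlb' : (tot : ℝ) ≤ p * cnt + 4 * K * p * T := by exact_mod_cast hlb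
  have htotlb' : (K : ℝ) * K ≤ 16 * tot := by exact_mod_cast htotlb
  have h1 : (tot : ℝ) ≠ 0 := ne_of_gt htotR
  have h2 : (p : ℝ) ≠ 0 := ne_of_gt hpR
  have key : (cnt : ℝ) / tot - 1 / p = ((p : ℝ) * cnt - tot) / ((p : ℝ) * tot) := by
    field_simp
  rw [key, abs_div, abs_of_pos (by positivity : (0 : ℝ) < (p : ℝ) * tot)]
  have hnum : |(p : ℝ) * cnt - tot| ≤ 4 * K * p * T := by
    rw [abs_le]
    constructor <;> linarith
  calc |(p : ℝ) * cnt - tot| / ((p : ℝ) * tot)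
      ≤ (4 * K * p * T) / ((p : ℝ) * tot) := by
        exact (div_le_div_iff_of_pos_right (by positivity : (0:ℝ) < (p:ℝ) * tot)).mpr hnum
    _ ≤ (64 * T + 1) / K := by
        rw [div_le_div_iff₀ (by positivity) hKR]
        nlinarith [mul_le_mul_of_nonneg_left htotlb' (by positivity : (0:ℝ) ≤ (p:ℝ) * T),
          mul_pos hpR htotR]
end

section
/- Let p be an odd prime. The number of pairs (k₂, j) with 0 ≤ k₂ < ord_p(2) and 0 ≤ j < p·ord_p(4) satisfying the congruence 2^{k₂}(4^j − 1) ≡ 2j (mod p) is exactly ord_p(2)·ord_p(4); in other words, the density of solutions in the fundamental domain is 1/p. -/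
open Filter Finset Real

/-- for an odd prime `p`, the number of pairs `(k₂, j)` with
`0 ≤ k₂ < ord_p(2)`, `0 ≤ j < p·ord_p(4)` and `2^{k₂}(4^j - 1) ≡ 2j (mod p)`
is exactly `ord_p(2)·ord_p(4)`. -/
theorem count_solutions_fundamental_domain (p : ℕ) (hp : p.Prime) (hodd : Odd p) :
    ((Finset.range (orderOf (2 : ZMod p)) ×ˢ
        Finset.range (p * orderOf (4 : ZMod p))).filter
      (fun q => (2 : ZMod p) ^ q.1 * ((4 : ZMod p) ^ q.2 - 1) = 2 * (q.2 : ZMod p))).card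
      = orderOf (2 : ZMod p) * orderOf (4 : ZMod p) := by
  haveI : Fact p.Prime := ⟨hp⟩
  have hp2 : p ≠ 2 := by rintro rfl; exact (Nat.not_odd_iff_even.mpr even_two) hodd
  have hppos : 0 < p := hp.pos
  have hp1 : 1 < p := hp.one_lt
  have h2ne : (2 : ZMod p) ≠ 0 := by
    have hnd : ¬ (p ∣ 2) := fun h => hp2 ((Nat.prime_dvd_prime_iff_eq hp Nat.prime_two).mp h)
    have : ((2 : ℕ) : ZMod p) ≠ 0 := by
      rw [Ne, ZMod.natCast_eq_zero_iff]; exact hnd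
    simpa using this
  have h4ne : (4 : ZMod p) ≠ 0 := by
    have h : (4 : ZMod p) = 2 * 2 := by ring
    rw [h]; exact mul_ne_zero h2ne h2ne
  set d2 := orderOf (2 : ZMod p) with hd2
  set d4 := orderOf (4 : ZMod p) with hd4
  have hd4dvd : d4 ∣ p - 1 := ZMod.orderOf_dvd_card_sub_one h4ne
  have hd4pos : 0 < d4 := by
    refine orderOf_pos_iff.mpr (isOfFinOrder_iff_pow_eq_one.mpr ⟨p - 1, by omega, ?_⟩)
    exact ZMod.pow_card_sub_one_eq_one h4ne
  have hd4lt : d4 < p := by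
    have := Nat.le_of_dvd (by omega) hd4dvd; omega
  have hco : Nat.Coprime d4 p := by
    refine Nat.coprime_comm.mp ((hp.coprime_iff_not_dvd).mpr (fun h => ?_))
    have := Nat.le_of_dvd hd4pos h; omega
  have key : ∀ k₂ : ℕ,
      ((range (p * d4)).filter
        (fun j : ℕ => (2 : ZMod p) ^ k₂ * ((4 : ZMod p) ^ j - 1) = 2 * (j : ZMod p))).card = d4 := by
    intro k₂
    have h2c : ∀ a : ℕ, 2 * ((2 : ZMod p)⁻¹ * 2 * ((2 : ZMod p) ^ k₂ * ((4 : ZMod p) ^ a - 1)))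
        = 2 * ((2 : ZMod p) ^ k₂ * ((4 : ZMod p) ^ a - 1)) := by
      intro a; rw [inv_mul_cancel₀ h2ne, one_mul]
    have hpow : ∀ n : ℕ, (4 : ZMod p) ^ (n % d4) = (4 : ZMod p) ^ n := by
      intro n; rw [hd4]; exact pow_mod_orderOf _ _
    have step1 : ((range (p * d4)).filter
          (fun j : ℕ => (2 : ZMod p) ^ k₂ * ((4 : ZMod p) ^ j - 1) = 2 * (j : ZMod p))).card
        = ((range d4 ×ˢ range p).filter
          (fun q : ℕ × ℕ => (2 : ZMod p) ^ k₂ * ((4 : ZMod p) ^ q.1 - 1) = 2 * (q.2 : ZMod p))).card := by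
      refine Finset.card_nbij' (fun j => (j % d4, j % p))
        (fun q => (Nat.chineseRemainder hco q.1 q.2 : ℕ)) ?_ ?_ ?_ ?_
      · intro j hj
        simp only [Finset.mem_coe, Finset.mem_filter, Finset.mem_range, Finset.mem_product] at hj ⊢
        obtain ⟨hjlt, hcond⟩ := hj
        refine ⟨⟨Nat.mod_lt _ hd4pos, Nat.mod_lt _ hppos⟩, ?_⟩
        rw [hpow, ZMod.natCast_mod]
        exact hcond
      · intro q hq
        simp only [Finset.mem_coe, Finset.mem_filter, Finset.mem_range, Finset.mem_product] at hq ⊢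
        obtain ⟨⟨ha, hr⟩, hcond⟩ := hq
        obtain ⟨hmod4, hmodp⟩ := (Nat.chineseRemainder hco q.1 q.2).2
        constructor
        · rw [mul_comm]; exact Nat.chineseRemainder_lt_mul hco q.1 q.2 hd4pos.ne' hppos.ne'
        · have e1 : (Nat.chineseRemainder hco q.1 q.2 : ℕ) % d4 = q.1 := by
            rw [Nat.ModEq] at hmod4; rw [hmod4, Nat.mod_eq_of_lt ha]
          have e2 : (Nat.chineseRemainder hco q.1 q.2 : ℕ) % p = q.2 := by
            rw [Nat.ModEq] at hmodp; rw [hmodp, Nat.mod_eq_of_lt hr]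
          calc (2 : ZMod p) ^ k₂ * ((4 : ZMod p) ^ ((Nat.chineseRemainder hco q.1 q.2 : ℕ)) - 1)
              = (2 : ZMod p) ^ k₂ * ((4 : ZMod p) ^ (((Nat.chineseRemainder hco q.1 q.2 : ℕ)) % d4) - 1) := by
                exact congrArg (fun t => (2 : ZMod p) ^ k₂ * (t - 1)) (hpow _).symm
            _ = 2 * (((Nat.chineseRemainder hco q.1 q.2 : ℕ) % p : ℕ) : ZMod p) := by
                rw [e1, e2, hcond]
            _ = 2 * ((Nat.chineseRemainder hco q.1 q.2 : ℕ) : ZMod p) := by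
                rw [ZMod.natCast_mod]
      · intro j hj
        simp only [Finset.mem_coe, Finset.mem_filter, Finset.mem_range] at hj
        have h1 : j ≡ j % d4 [MOD d4] := (Nat.mod_modEq j d4).symm
        have h2 : j ≡ j % p [MOD p] := (Nat.mod_modEq j p).symm
        have := Nat.chineseRemainder_modEq_unique hco h1 h2
        have hlt : (Nat.chineseRemainder hco (j % d4) (j % p) : ℕ) < d4 * p :=
          Nat.chineseRemainder_lt_mul hco _ _ hd4pos.ne' hppos.ne'
        rw [Nat.ModEq] at this
        have hj' : j < d4 * p := by rw [mul_comm]; exact hj.1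
        rw [Nat.mod_eq_of_lt hj', Nat.mod_eq_of_lt hlt] at this
        exact this.symm
      · intro q hq
        simp only [Finset.mem_coe, Finset.mem_filter, Finset.mem_range, Finset.mem_product] at hq
        obtain ⟨⟨ha, hr⟩, _⟩ := hq
        obtain ⟨hmod4, hmodp⟩ := (Nat.chineseRemainder hco q.1 q.2).2
        rw [Nat.ModEq] at hmod4 hmodp
        have e1 : (Nat.chineseRemainder hco q.1 q.2 : ℕ) % d4 = q.1 := by
          rw [hmod4, Nat.mod_eq_of_lt ha]
        have e2 : (Nat.chineseRemainder hco q.1 q.2 : ℕ) % p = q.2 := by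
          rw [hmodp, Nat.mod_eq_of_lt hr]
        exact Prod.ext e1 e2
    rw [step1, Finset.card_filter, Finset.sum_product]
    have uniq : ∀ a : ℕ,
        (∑ r ∈ range p, if (2 : ZMod p) ^ k₂ * ((4 : ZMod p) ^ a - 1) = 2 * (r : ZMod p)
          then 1 else 0) = 1 := by
      intro a
      rw [← Finset.card_filter, Finset.card_eq_one]
      set c : ZMod p := (2 : ZMod p)⁻¹ * ((2 : ZMod p) ^ k₂ * ((4 : ZMod p) ^ a - 1)) with hc
      have h2c' : 2 * c = (2 : ZMod p) ^ k₂ * ((4 : ZMod p) ^ a - 1) := by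
        rw [hc, ← mul_assoc, mul_inv_cancel₀ h2ne, one_mul]
      refine ⟨c.val, ?_⟩
      ext r
      simp only [Finset.mem_filter, Finset.mem_range, Finset.mem_singleton]
      constructor
      · rintro ⟨hrlt, hcond⟩
        have hr : (r : ZMod p) = c := mul_left_cancel₀ h2ne (by rw [h2c', ← hcond])
        have hv := ZMod.val_cast_of_lt hrlt
        rw [← hv, hr]
      · rintro rfl
        refine ⟨ZMod.val_lt _, ?_⟩
        rw [ZMod.natCast_val, ZMod.cast_id, ← h2c']
    calc (∑ a ∈ range d4, ∑ r ∈ range p,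
          if (2 : ZMod p) ^ k₂ * ((4 : ZMod p) ^ a - 1) = 2 * (r : ZMod p) then 1 else 0)
        = ∑ a ∈ range d4, 1 := Finset.sum_congr rfl (fun a _ => uniq a)
      _ = d4 := by simp
  rw [Finset.card_filter, Finset.sum_product]
  calc (∑ k₂ ∈ range d2, ∑ j ∈ range (p * d4),
        if (2 : ZMod p) ^ k₂ * ((4 : ZMod p) ^ j - 1) = 2 * (j : ZMod p) then 1 else 0)
      = ∑ k₂ ∈ range d2, d4 := by
        refine Finset.sum_congr rfl (fun k₂ _ => ?_)
        rw [← Finset.card_filter]; exact key k₂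
    _ = d2 * d4 := by simp [mul_comm]
end

section
/- The sum ∑_{η ≥ 1, η odd} μ²(η)·g(η)/η converges and equals ∏_{p>2} (1 + 1/(p(p−2))) = ∏_{p>2} (p−1)²/(p(p−2)) = 1/C₂. -/
open Filter Finset Real

noncomputable def Ffun (n : ℕ) : ℝ := if Odd n then gfun n / n else 0

lemma three_le_of_mem {n p : ℕ} (hodd : Odd n) (hp : p ∈ n.primeFactors) : 3 ≤ p := by
  have hpp := Nat.prime_of_mem_primeFactors hp
  have hdvd := Nat.dvd_of_mem_primeFactors hp
  have hne : p ≠ 2 := by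
    rintro rfl
    exact (Nat.not_odd_iff_even.mpr ((even_iff_two_dvd).mpr hdvd)) hodd
  have := hpp.two_le
  omega

lemma gfun_mul {m n : ℕ} (h : Nat.Coprime m n) : gfun (m * n) = gfun m * gfun n := by
  by_cases hm : Squarefree m ∧ Odd m
  · by_cases hn : Squarefree n ∧ Odd n
    · have hmn : Squarefree (m * n) ∧ Odd (m * n) :=
        ⟨(Nat.squarefree_mul h).mpr ⟨hm.1, hn.1⟩, Nat.odd_mul.mpr ⟨hm.2, hn.2⟩⟩
      rw [gfun, if_pos hmn, gfun, if_pos hm, gfun, if_pos hn,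
        Nat.primeFactors_mul hm.1.ne_zero hn.1.ne_zero,
        Finset.prod_union h.disjoint_primeFactors]
    · have hmn : ¬(Squarefree (m * n) ∧ Odd (m * n)) := fun hc =>
        hn ⟨hc.1.squarefree_of_dvd (dvd_mul_left n m), (Nat.odd_mul.mp hc.2).2⟩
      simp [gfun, hmn, hn]
  · have hmn : ¬(Squarefree (m * n) ∧ Odd (m * n)) := fun hc =>
      hm ⟨hc.1.squarefree_of_dvd (dvd_mul_right m n), (Nat.odd_mul.mp hc.2).1⟩
    simp [gfun, hmn, hm]

lemma Ffun_zero : Ffun 0 = 0 := by simp [Ffun]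

lemma Ffun_one : Ffun 1 = 1 := by
  simp [Ffun, gfun, squarefree_one]

lemma Ffun_mul {m n : ℕ} (h : Nat.Coprime m n) : Ffun (m * n) = Ffun m * Ffun n := by
  unfold Ffun
  by_cases hm : Odd m
  · by_cases hn : Odd n
    · rw [if_pos (Nat.odd_mul.mpr ⟨hm, hn⟩), if_pos hm, if_pos hn, gfun_mul h,
        Nat.cast_mul, div_mul_div_comm]
    · rw [if_neg (fun hc => hn (Nat.odd_mul.mp hc).2), if_neg hn, mul_zero]
  · rw [if_neg (fun hc => hm (Nat.odd_mul.mp hc).1), if_neg hm, zero_mul]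

lemma gfun_nonneg (n : ℕ) : 0 ≤ gfun n := by
  unfold gfun
  split_ifs with h
  · refine Finset.prod_nonneg fun p hp => ?_
    have h3 : (3 : ℝ) ≤ p := by exact_mod_cast three_le_of_mem h.2 hp
    have : (0:ℝ) < (p:ℝ) - 2 := by linarith
    positivity
  · exact le_refl 0

lemma Ffun_nonneg (n : ℕ) : 0 ≤ Ffun n := by
  unfold Ffun
  split_ifs with h
  · exact div_nonneg (gfun_nonneg n) (Nat.cast_nonneg n)
  · exact le_refl 0

lemma rpow_three_halves {x : ℝ} (hx : 0 ≤ x) : x ^ (3/2 : ℝ) = x * Real.sqrt x := by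
  rw [show (3/2 : ℝ) = 1 + 1/2 by norm_num, Real.rpow_add' hx (by norm_num), Real.rpow_one,
    ← Real.sqrt_eq_rpow]

lemma per_prime {p : ℕ} (hp : 5 ≤ p) :
    ((((p:ℝ)) - 2) * p)⁻¹ ≤ (((p:ℝ)) ^ (3/2 : ℝ))⁻¹ := by
  have hp5 : (5:ℝ) ≤ (p:ℝ) := by exact_mod_cast hp
  have h1 : ((p:ℝ)) ^ (3/2 : ℝ) = p * Real.sqrt p := rpow_three_halves (by linarith)
  have h2 : Real.sqrt p ≤ (p:ℝ) - 2 := by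
    have : ((p:ℝ)) ≤ ((p:ℝ) - 2) ^ 2 := by nlinarith
    calc Real.sqrt p ≤ Real.sqrt (((p:ℝ) - 2)^2) := Real.sqrt_le_sqrt this
      _ = (p:ℝ) - 2 := Real.sqrt_sq (by linarith)
  rw [h1]
  refine inv_anti₀ (by positivity) ?_
  calc (p:ℝ) * Real.sqrt p ≤ (p:ℝ) * ((p:ℝ) - 2) := by
        exact mul_le_mul_of_nonneg_left h2 (by linarith)
    _ = ((p:ℝ) - 2) * p := by ring

lemma sqrt3_factor : Real.sqrt 3 * (((3:ℝ)) ^ (3/2 : ℝ))⁻¹ = ((((3:ℝ)) - 2) * 3)⁻¹ := by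
  rw [rpow_three_halves (by norm_num)]
  have h3 : Real.sqrt 3 * Real.sqrt 3 = 3 := Real.mul_self_sqrt (by norm_num)
  have hpos : (0:ℝ) < Real.sqrt 3 := Real.sqrt_pos.mpr (by norm_num)
  field_simp
  nlinarith

lemma Ffun_le (n : ℕ) : Ffun n ≤ Real.sqrt 3 * (((n:ℝ)) ^ (3/2 : ℝ))⁻¹ := by
  have hRHS : 0 ≤ Real.sqrt 3 * (((n:ℝ)) ^ (3/2 : ℝ))⁻¹ := by positivity
  by_cases hcond : Squarefree n ∧ Odd n
  · obtain ⟨hsq, hodd⟩ := hcond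
    rw [Ffun, if_pos hodd, gfun, if_pos ⟨hsq, hodd⟩]
    set S := n.primeFactors with hS
    have hn : (n:ℝ) = ∏ p ∈ S, (p:ℝ) := by
      rw [← Nat.cast_prod, Nat.prod_primeFactors_of_squarefree hsq]
    have hrw : ((n:ℝ)) ^ (3/2 : ℝ) = ∏ p ∈ S, ((p:ℝ)) ^ (3/2 : ℝ) := by
      rw [hn, ← Real.finset_prod_rpow S _ (fun p _ => by positivity) _]
    have hL : (∏ p ∈ S, (1 / ((p:ℝ) - 2))) / (n:ℝ)
        = ∏ p ∈ S, ((((p:ℝ)) - 2) * p)⁻¹ := by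
      rw [hn, div_eq_mul_inv, ← Finset.prod_inv_distrib, ← Finset.prod_mul_distrib]
      refine Finset.prod_congr rfl fun p hp => ?_
      rw [one_div, ← mul_inv]
    rw [hL, hrw, ← Finset.prod_inv_distrib]
    have hmem : ∀ p ∈ S, 3 ≤ p := fun p hp => three_le_of_mem hodd hp
    have hge5 : ∀ p ∈ S, p ≠ 3 → 5 ≤ p := by
      intro p hp hp3
      have := hmem p hp
      have hpp := Nat.prime_of_mem_primeFactors hp
      have h4 : p ≠ 4 := by rintro rfl; norm_num at hpp
      omega
    by_cases h3 : 3 ∈ S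
    · rw [← Finset.prod_erase_mul _ _ h3, ← Finset.prod_erase_mul _ _ h3]
      have hprod : ∏ p ∈ S.erase 3, ((((p:ℝ)) - 2) * p)⁻¹
          ≤ ∏ p ∈ S.erase 3, (((p:ℝ)) ^ (3/2 : ℝ))⁻¹ := by
        refine Finset.prod_le_prod (fun p hp => ?_)
          (fun p hp => per_prime (hge5 p (Finset.mem_of_mem_erase hp) (Finset.ne_of_mem_erase hp)))
        have h3p : (3:ℝ) ≤ (p:ℝ) := by
          exact_mod_cast hmem p (Finset.mem_of_mem_erase hp)
        exact inv_nonneg.mpr (by nlinarith)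
      have hc : ((((3:ℕ):ℝ)) - 2) * ((3:ℕ):ℝ) = 3 := by push_cast; norm_num
      have hc2 : (((3:ℕ):ℝ)) ^ (3/2 : ℝ) = ((3:ℝ)) ^ (3/2 : ℝ) := by push_cast; ring_nf
      rw [hc, hc2]
      have hfin : Real.sqrt 3 * ((∏ p ∈ S.erase 3, (((p:ℝ)) ^ (3/2:ℝ))⁻¹) * (((3:ℝ))^(3/2:ℝ))⁻¹)
          = (∏ p ∈ S.erase 3, (((p:ℝ)) ^ (3/2:ℝ))⁻¹) * (((3:ℝ) - 2) * 3)⁻¹ := by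
        rw [show (∀ a b c : ℝ, a * (b * c) = b * (a * c)) from fun a b c => by ring,
          sqrt3_factor]
      rw [hfin]
      have : ((3:ℝ) - 2) * 3 = 3 := by norm_num
      rw [this]
      exact mul_le_mul_of_nonneg_right hprod (by positivity)
    · calc ∏ p ∈ S, ((((p:ℝ)) - 2) * p)⁻¹ ≤ ∏ p ∈ S, (((p:ℝ)) ^ (3/2 : ℝ))⁻¹ := by
            refine Finset.prod_le_prod (fun p hp => ?_)
              (fun p hp => per_prime (hge5 p hp (by rintro rfl; exact h3 hp)))
            have h3p : (3:ℝ) ≤ (p:ℝ) := by exact_mod_cast hmem p hp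
            exact inv_nonneg.mpr (by nlinarith)
        _ ≤ Real.sqrt 3 * ∏ p ∈ S, (((p:ℝ)) ^ (3/2 : ℝ))⁻¹ := by
            have h1 : (1:ℝ) ≤ Real.sqrt 3 := by
              rw [show (1:ℝ) = Real.sqrt 1 by simp]
              exact Real.sqrt_le_sqrt (by norm_num)
            have h2 : (0:ℝ) ≤ ∏ p ∈ S, (((p:ℝ)) ^ (3/2 : ℝ))⁻¹ :=
              Finset.prod_nonneg fun p hp => by positivity
            nlinarith
  · rw [Ffun]
    split_ifs with hodd
    · rw [gfun, if_neg hcond, zero_div]; exact hRHS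
    · exact hRHS

lemma Ffun_summable_norm : Summable (fun n => ‖Ffun n‖) := by
  have h : Summable (fun n : ℕ => Real.sqrt 3 * (((n:ℝ)) ^ (3/2 : ℝ))⁻¹) :=
    (Real.summable_nat_rpow_inv.mpr (by norm_num)).mul_left _
  refine Summable.of_nonneg_of_le (fun n => norm_nonneg _) (fun n => ?_) h
  rw [Real.norm_of_nonneg (Ffun_nonneg n)]
  exact Ffun_le n

lemma Ffun_not_squarefree {n : ℕ} (h : ¬ Squarefree n) : Ffun n = 0 := by
  unfold Ffun gfun
  split_ifs with h1 h2
  · exact absurd h2.1 h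
  · simp
  · rfl

lemma Ffun_euler_factor (p : Nat.Primes) :
    (∑' e : ℕ, Ffun ((p : ℕ) ^ e))
      = if 2 < (p : ℕ) then (1 + 1 / (((p : ℕ) : ℝ) * (((p : ℕ) : ℝ) - 2))) else 1 := by
  have hp := p.2
  have h0 : ∀ e ∉ ({0, 1} : Finset ℕ), Ffun ((p:ℕ) ^ e) = 0 := by
    intro e he
    simp only [Finset.mem_insert, Finset.mem_singleton] at he
    have he2 : 2 ≤ e := by omega
    refine Ffun_not_squarefree fun hs => ?_
    have hdvd : (p:ℕ) * (p:ℕ) ∣ (p:ℕ) ^ e := by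
      rw [← sq]
      exact pow_dvd_pow _ he2
    exact hp.one_lt.ne' (Nat.isUnit_iff.mp (hs _ hdvd))
  rw [tsum_eq_sum h0, Finset.sum_insert (by norm_num), Finset.sum_singleton, pow_zero, pow_one,
    Ffun_one]
  by_cases h2 : 2 < (p:ℕ)
  · have hodd : Odd (p:ℕ) := hp.odd_of_ne_two (by omega)
    have h3 : (3:ℝ) ≤ ((p:ℕ):ℝ) := by
      have : 3 ≤ (p:ℕ) := by
        have := hp.two_le
        rcases Nat.lt_or_ge (p:ℕ) 4 with h|h
        · omega
        · omega
      exact_mod_cast this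
    rw [if_pos h2, Ffun, if_pos hodd, gfun, if_pos ⟨hp.prime.squarefree , hodd⟩]
    rw [Nat.Prime.primeFactors hp, Finset.prod_singleton]
    have hne1 : ((p:ℕ):ℝ) ≠ 0 := by linarith
    have hne2 : ((p:ℕ):ℝ) - 2 ≠ 0 := by linarith
    field_simp
  · have hp2 : (p:ℕ) = 2 := by have := hp.two_le; omega
    rw [if_neg h2, Ffun, if_neg (by rw [hp2]; decide), add_zero]

lemma stmt_eq_Ffun (η : ℕ) :
    (if Odd η then ((ArithmeticFunction.moebius η : ℤ) : ℝ) ^ 2 * gfun η / η else 0) = Ffun η := by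
  unfold Ffun
  split_ifs with h
  · by_cases hsq : Squarefree η
    · have hμ : (ArithmeticFunction.moebius η) ^ 2 = 1 :=
        ArithmeticFunction.moebius_sq_eq_one_of_squarefree hsq
      have hμ' : (((ArithmeticFunction.moebius η : ℤ) : ℝ)) ^ 2 = 1 := by exact_mod_cast hμ
      rw [hμ', one_mul]
    · rw [ArithmeticFunction.moebius_eq_zero_of_not_squarefree hsq]
      rw [gfun, if_neg (fun hc => hsq hc.1)]
      norm_num
  · rfl

lemma three_le_cast {p : Nat.Primes} (h : 2 < (p : ℕ)) : (3:ℝ) ≤ ((p : ℕ) : ℝ) := by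
  exact_mod_cast Nat.succ_le_of_lt h


/-- `∑_{η odd} μ²(η) g(η)/η` converges and equals
`∏_{p>2} (1 + 1/(p(p-2))) = ∏_{p>2} (p-1)²/(p(p-2)) = 1/C₂`. -/
theorem gsum_eq_inv_twinC :
    Summable (fun η : ℕ =>
      if Odd η then ((ArithmeticFunction.moebius η : ℤ) : ℝ) ^ 2 * gfun η / η else 0) ∧
    (∑' η : ℕ,
      if Odd η then ((ArithmeticFunction.moebius η : ℤ) : ℝ) ^ 2 * gfun η / η else 0)
      = (∏' p : Nat.Primes,
          if 2 < (p : ℕ) then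
            (1 + 1 / (((p : ℕ) : ℝ) * (((p : ℕ) : ℝ) - 2))) else 1) ∧
    (∏' p : Nat.Primes,
        if 2 < (p : ℕ) then
          (1 + 1 / (((p : ℕ) : ℝ) * (((p : ℕ) : ℝ) - 2))) else 1)
      = (∏' p : Nat.Primes,
          if 2 < (p : ℕ) then
            (((p : ℕ) : ℝ) - 1) ^ 2 / (((p : ℕ) : ℝ) * (((p : ℕ) : ℝ) - 2)) else 1) ∧
    (∏' p : Nat.Primes,
        if 2 < (p : ℕ) then
          (((p : ℕ) : ℝ) - 1) ^ 2 / (((p : ℕ) : ℝ) * (((p : ℕ) : ℝ) - 2)) else 1)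
      = 1 / twinC := by
  have hsum := Ffun_summable_norm
  have hsumF : Summable Ffun := hsum.of_norm
  have hE := EulerProduct.eulerProduct_hasProd Ffun_one (fun {m n} h => Ffun_mul h) hsum Ffun_zero
  set A : Nat.Primes → ℝ := fun p =>
    if 2 < (p : ℕ) then (1 + 1 / (((p : ℕ) : ℝ) * (((p : ℕ) : ℝ) - 2))) else 1 with hAdef
  set A₂ : Nat.Primes → ℝ := fun p =>
    if 2 < (p : ℕ) then (((p : ℕ) : ℝ) - 1) ^ 2 / (((p : ℕ) : ℝ) * (((p : ℕ) : ℝ) - 2)) else 1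
    with hA2def
  set S : ℝ := ∑' n, Ffun n with hSdef
  have hA : HasProd A S := by
    have heq : (fun p : Nat.Primes => ∑' e : ℕ, Ffun ((p : ℕ) ^ e)) = A :=
      funext Ffun_euler_factor
    rwa [heq] at hE
  have hfac : A = A₂ := by
    funext p
    simp only [hAdef, hA2def]
    split_ifs with h
    · have h3 := three_le_cast h
      have hne1 : ((p:ℕ):ℝ) ≠ 0 := by linarith
      have hne2 : ((p:ℕ):ℝ) - 2 ≠ 0 := by linarith
      field_simp
      ring
    · rfl
  have hA₂ : HasProd A₂ S := hfac ▸ hA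
  have hS1 : (1:ℝ) ≤ S := by
    have := Summable.le_tsum hsumF 1 fun j _ => Ffun_nonneg j
    rwa [Ffun_one] at this
  have hS0 : (0:ℝ) < S := lt_of_lt_of_le one_pos hS1
  have hB : HasProd (fun p : Nat.Primes => (A₂ p)⁻¹) S⁻¹ := by
    have h1 : Tendsto (fun s : Finset Nat.Primes => ∏ p ∈ s, A₂ p) atTop (nhds S) := hA₂
    have h2 := h1.inv₀ (ne_of_gt hS0)
    have h3 : ∀ s : Finset Nat.Primes, (∏ p ∈ s, A₂ p)⁻¹ = ∏ p ∈ s, (A₂ p)⁻¹ := fun s =>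
      (Finset.prod_inv_distrib _).symm
    unfold HasProd
    simpa only [h3, SummationFilter.unconditional_filter] using h2
  have htwin : twinC = S⁻¹ := by
    rw [twinC]
    have heq : (fun p : Nat.Primes => if 2 < (p:ℕ) then (1 - 1 / (((p:ℕ):ℝ) - 1) ^ 2) else 1)
        = fun p => (A₂ p)⁻¹ := by
      funext p
      simp only [hA2def]
      split_ifs with h
      · have h3 := three_le_cast h
        have hne1 : ((p:ℕ):ℝ) ≠ 0 := by linarith
        have hne2 : ((p:ℕ):ℝ) - 2 ≠ 0 := by linarith
        have hne3 : ((p:ℕ):ℝ) - 1 ≠ 0 := by linarith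
        field_simp
        ring
      · simp
    rw [heq]
    exact hB.tprod_eq
  refine ⟨(summable_congr stmt_eq_Ffun).mpr hsumF, ?_, ?_, ?_⟩
  · rw [tsum_congr stmt_eq_Ffun]
    exact hA.tprod_eq.symm
  · rw [hfac]
  · rw [htwin, one_div, inv_inv]
    exact hA₂.tprod_eq
end

section
/- For every real X ≥ 1, ∑_{1 ≤ j ≤ X} f(2j) ≤ X/C₂. -/
open Filter Finset Real

noncomputable def tcf (p : Nat.Primes) : ℝ :=
  if 2 < (p : ℕ) then (1 - 1 / (((p : ℕ) : ℝ) - 1) ^ 2) else 1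

lemma tcf_pos (p : Nat.Primes) : 0 < tcf p := by
  unfold tcf
  split
  · rename_i h
    have h3 : (3 : ℝ) ≤ ((p : ℕ) : ℝ) := by exact_mod_cast h
    have h2 : (2 : ℝ) ≤ ((p : ℕ) : ℝ) - 1 := by linarith
    have : 1 / (((p : ℕ) : ℝ) - 1) ^ 2 ≤ 1 / 4 := by
      apply div_le_div_of_nonneg_left (by norm_num) (by norm_num)
      nlinarith
    linarith
  · norm_num

lemma tcf_le_one (p : Nat.Primes) : tcf p ≤ 1 := by
  unfold tcf
  split
  · rename_i h
    have h3 : (3 : ℝ) ≤ ((p : ℕ) : ℝ) := by exact_mod_cast h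
    have : 0 ≤ 1 / (((p : ℕ) : ℝ) - 1) ^ 2 := by positivity
    linarith
  · exact le_rfl

lemma summable_aux : Summable (fun n : ℕ => 2 / (((n : ℝ)) - 1) ^ 2) := by
  rw [← summable_nat_add_iff 1]
  have : (fun n : ℕ => 2 / ((((n + 1 : ℕ)) : ℝ) - 1) ^ 2) = (fun n : ℕ => 2 * ((1 : ℝ) / (n : ℝ) ^ 2)) := by
    funext n; push_cast; ring
  rw [this]
  exact (Real.summable_one_div_nat_pow.mpr one_lt_two).mul_left 2

lemma summable_log_tcf : Summable (fun p : Nat.Primes => - Real.log (tcf p)) := by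
  apply Summable.of_nonneg_of_le (fun p => ?_) (fun p => ?_)
    (summable_aux.comp_injective (fun a b h => Subtype.ext h : Function.Injective ((↑) : Nat.Primes → ℕ)))
  · simp only [neg_nonneg]
    exact Real.log_nonpos (le_of_lt (tcf_pos p)) (tcf_le_one p)
  · unfold tcf
    split
    · rename_i h
      have h3 : (3 : ℝ) ≤ ((p : ℕ) : ℝ) := by exact_mod_cast h
      set c : ℝ := ((p : ℕ) : ℝ) with hc
      have hq : (4 : ℝ) ≤ (c - 1) ^ 2 := by nlinarith
      set x : ℝ := 1 / (c - 1) ^ 2 with hx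
      have hx0 : 0 < x := by positivity
      have hx4 : x ≤ 1 / 4 := by
        rw [hx]; exact div_le_div_of_nonneg_left (by norm_num) (by norm_num) hq
      have hpos : 0 < 1 - x := by linarith
      have h1 := Real.log_le_sub_one_of_pos (x := (1 - x)⁻¹) (by positivity)
      rw [← Real.log_inv]
      have hinv : (1 - x)⁻¹ - 1 = x / (1 - x) := by field_simp; ring
      have h2 : x / (1 - x) ≤ 2 * x := by
        rw [div_le_iff₀ hpos]; nlinarith
      have : Real.log (1 - x)⁻¹ ≤ 2 * x := by
        rw [hinv] at h1; linarith
      calc Real.log (1 - x)⁻¹ ≤ 2 * x := this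
        _ = 2 / (c - 1) ^ 2 := by rw [hx]; ring
    · rename_i h
      simp only [Real.log_one, neg_zero]
      apply div_nonneg <;> positivity

lemma twinC_tprod : twinC = ∏' p : Nat.Primes, tcf p := rfl

lemma twinC_eq : twinC = Real.exp (∑' p : Nat.Primes, Real.log (tcf p)) := by
  have hs : ∀ _ : Unit, Summable fun p : Nat.Primes => Real.log (tcf p) :=
    fun _ => summable_log_tcf.neg.congr (fun p => by ring)
  have h := Real.rexp_tsum_eq_tprod (fun p => tcf_pos p) (hs ())
  rw [twinC_tprod]
  exact h.symm

lemma twinC_pos : 0 < twinC := by rw [twinC_eq]; exact Real.exp_pos _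

lemma multipliable_tcf : Multipliable tcf := by
  have hs : ∀ _ : Unit, Summable fun p : Nat.Primes => Real.log (tcf p) :=
    fun _ => summable_log_tcf.neg.congr (fun p => by ring)
  exact Real.multipliable_of_summable_log (fun p => tcf_pos p) (hs ())

lemma summable_log_tcf' : Summable fun p : Nat.Primes => Real.log (tcf p) := by
  have := summable_log_tcf.neg
  simpa using this

lemma exp_tsum_log {ι : Type*} (f : ι → ℝ) (h0 : ∀ i, 0 < f i)
    (hs : Summable fun i => Real.log (f i)) :
    Real.exp (∑' i, Real.log (f i)) = ∏' i, f i := by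
  have h := Real.rexp_tsum_eq_tprod h0 hs
  simpa using h

lemma tprod_pos {ι : Type*} (f : ι → ℝ) (h0 : ∀ i, 0 < f i)
    (hs : Summable fun i => Real.log (f i)) : 0 < ∏' i, f i := by
  rw [← exp_tsum_log f h0 hs]; exact Real.exp_pos _

lemma tprod_le_one' {ι : Type*} (f : ι → ℝ) (h0 : ∀ i, 0 < f i) (h1 : ∀ i, f i ≤ 1)
    (hs : Summable fun i => Real.log (f i)) : ∏' i, f i ≤ 1 := by
  rw [← exp_tsum_log f h0 hs, Real.exp_le_one_iff]
  exact tsum_nonpos (fun i => Real.log_nonpos (h0 i).le (h1 i))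

lemma twinC_le_prod (s : Finset Nat.Primes) : twinC ≤ ∏ p ∈ s, tcf p := by
  have hsplit := Summable.sum_add_tsum_subtype_compl summable_log_tcf' s
  have hcompl : (∑' x : { x // x ∉ s }, Real.log (tcf ↑x)) ≤ 0 :=
    tsum_nonpos (fun x => Real.log_nonpos (tcf_pos _).le (tcf_le_one _))
  rw [twinC_eq, ← hsplit, Real.exp_add]
  have h1 : Real.exp (∑ p ∈ s, Real.log (tcf p)) = ∏ p ∈ s, tcf p := by
    rw [Real.exp_sum]
    exact Finset.prod_congr rfl (fun p _ => Real.exp_log (tcf_pos p))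
  rw [h1]
  calc (∏ p ∈ s, tcf p) * Real.exp (∑' x : { x // x ∉ s }, Real.log (tcf ↑x))
      ≤ (∏ p ∈ s, tcf p) * 1 := by
        apply mul_le_mul_of_nonneg_left _ (Finset.prod_nonneg fun p _ => (tcf_pos p).le)
        rw [Real.exp_le_one_iff]; exact hcompl
    _ = ∏ p ∈ s, tcf p := mul_one _


/-- for every real `X ≥ 1`, `∑_{1 ≤ j ≤ X} f(2j) ≤ X/C₂`. -/
theorem linear_sum_f_bound (X : ℝ) (hX : 1 ≤ X) :
    ∑ j ∈ Finset.Icc 1 ⌊X⌋₊, ffun (2 * j) ≤ X / twinC := by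
  classical
  set P := ⌊X⌋₊ with hPdef
  have hPX : (P : ℝ) ≤ X := Nat.floor_le (by linarith)
  set Pr : Finset ℕ := (Finset.Icc 1 P).filter (fun p => p.Prime ∧ 2 < p) with hPr
  have hPrmem : ∀ p ∈ Pr, p.Prime ∧ 2 < p := fun p hp => (Finset.mem_filter.mp hp).2
  -- Step A : expand ffun (2j) as a sum over subsets of odd prime factors
  have hstepA : ∀ j ∈ Finset.Icc 1 P, ffun (2 * j) =
      ∑ T ∈ (j.primeFactors.filter (fun p => 2 < p)).powerset,
        ∏ p ∈ T, (1 / ((p : ℝ) - 2)) := by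
    intro j hj
    have hj0 : j ≠ 0 := by
      have := (Finset.mem_Icc.mp hj).1; omega
    have hfe : (2 * j).primeFactors.filter (fun p => 2 < p)
        = j.primeFactors.filter (fun p => 2 < p) := by
      rw [Nat.primeFactors_mul two_ne_zero hj0, Nat.Prime.primeFactors Nat.prime_two]
      ext p
      simp only [Finset.mem_filter, Finset.mem_union, Finset.mem_singleton]
      constructor
      · rintro ⟨h1 | h1, h2⟩
        · omega
        · exact ⟨h1, h2⟩
      · rintro ⟨h1, h2⟩; exact ⟨Or.inr h1, h2⟩
    have hfact : ∀ p ∈ j.primeFactors.filter (fun p => 2 < p),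
        ((p : ℝ) - 1) / ((p : ℝ) - 2) = 1 / ((p : ℝ) - 2) + 1 := by
      intro p hp
      have h2p : 2 < p := (Finset.mem_filter.mp hp).2
      have h3 : (3 : ℝ) ≤ (p : ℝ) := by exact_mod_cast h2p
      have hne : (p : ℝ) - 2 ≠ 0 := by linarith
      field_simp
      ring
    rw [ffun, hfe, Finset.prod_congr rfl hfact, Finset.prod_add]
    apply Finset.sum_congr rfl
    intro T _
    rw [Finset.prod_const_one, mul_one]
  -- odd prime factors of j ≤ P lie in Pr
  have hsub : ∀ j ∈ Finset.Icc 1 P, (j.primeFactors.filter (fun p => 2 < p)) ⊆ Pr := by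
    intro j hj p hp
    obtain ⟨hp1, hp2⟩ := Finset.mem_filter.mp hp
    obtain ⟨hj1, hj2⟩ := Finset.mem_Icc.mp hj
    refine Finset.mem_filter.mpr ⟨Finset.mem_Icc.mpr ⟨by omega, ?_⟩,
      Nat.prime_of_mem_primeFactors hp1, hp2⟩
    exact le_trans (Nat.le_of_dvd (by omega) (Nat.dvd_of_mem_primeFactors hp1)) hj2
  -- counting
  have hcard : ∀ T ∈ Pr.powerset,
      ((Finset.Icc 1 P).filter
        (fun j => T ⊆ j.primeFactors.filter (fun p => 2 < p))).card
      = P / (∏ p ∈ T, p) := by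
    intro T hT
    rw [Finset.mem_powerset] at hT
    have hset : (Finset.Icc 1 P).filter
          (fun j => T ⊆ j.primeFactors.filter (fun p => 2 < p))
        = (Finset.Ioc 0 P).filter (fun j => (∏ p ∈ T, p) ∣ j) := by
      ext j
      simp only [Finset.mem_filter, Finset.mem_Icc, Finset.mem_Ioc]
      constructor
      · rintro ⟨⟨h1, h2⟩, hTj⟩
        refine ⟨⟨by omega, h2⟩, ?_⟩
        calc (∏ p ∈ T, p) ∣ ∏ p ∈ j.primeFactors, p :=
              Finset.prod_dvd_prod_of_subset _ _ _
                (fun p hp => (Finset.mem_filter.mp (hTj hp)).1)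
          _ ∣ j := Nat.prod_primeFactors_dvd j
      · rintro ⟨⟨h1, h2⟩, hdvd⟩
        refine ⟨⟨by omega, h2⟩, fun p hp => ?_⟩
        obtain ⟨_, hprime, h2p⟩ := Finset.mem_filter.mp (hT hp)
        exact Finset.mem_filter.mpr ⟨Nat.mem_primeFactors.mpr
          ⟨hprime, dvd_trans (Finset.dvd_prod_of_mem _ hp) hdvd, by omega⟩, h2p⟩
    rw [hset, Nat.Ioc_filter_dvd_card_eq_div]
  -- swap sums
  have key : ∑ j ∈ Finset.Icc 1 P, ffun (2 * j)
      = ∑ T ∈ Pr.powerset, (∏ p ∈ T, (1 / ((p : ℝ) - 2)))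
          * (((P / ∏ p ∈ T, p : ℕ)) : ℝ) := by
    calc ∑ j ∈ Finset.Icc 1 P, ffun (2 * j)
        = ∑ j ∈ Finset.Icc 1 P, ∑ T ∈ Pr.powerset,
            (if T ⊆ j.primeFactors.filter (fun p => 2 < p) then
              ∏ p ∈ T, (1 / ((p : ℝ) - 2)) else 0) := by
          apply Finset.sum_congr rfl
          intro j hj
          rw [hstepA j hj, ← Finset.sum_filter]
          apply Finset.sum_congr _ (fun _ _ => rfl)
          ext T
          simp only [Finset.mem_filter, Finset.mem_powerset]
          constructor
          · intro h; exact ⟨h.trans (hsub j hj), h⟩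
          · exact fun h => h.2
      _ = ∑ T ∈ Pr.powerset, ∑ j ∈ Finset.Icc 1 P,
            (if T ⊆ j.primeFactors.filter (fun p => 2 < p) then
              ∏ p ∈ T, (1 / ((p : ℝ) - 2)) else 0) := Finset.sum_comm
      _ = ∑ T ∈ Pr.powerset, (∏ p ∈ T, (1 / ((p : ℝ) - 2)))
            * (((P / ∏ p ∈ T, p : ℕ)) : ℝ) := by
          apply Finset.sum_congr rfl
          intro T hT
          rw [← Finset.sum_filter, Finset.sum_const, nsmul_eq_mul, mul_comm,
            hcard T hT]
  -- bound the counting term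
  have hbound : ∑ T ∈ Pr.powerset, (∏ p ∈ T, (1 / ((p : ℝ) - 2)))
        * (((P / ∏ p ∈ T, p : ℕ)) : ℝ)
      ≤ X * ∏ p ∈ Pr, (1 / (((p : ℝ) - 2) * (p : ℝ)) + 1) := by
    have hterm : ∀ T ∈ Pr.powerset, (∏ p ∈ T, (1 / ((p : ℝ) - 2)))
        * (((P / ∏ p ∈ T, p : ℕ)) : ℝ)
        ≤ X * ∏ p ∈ T, (1 / (((p : ℝ) - 2) * (p : ℝ))) := by
      intro T hT
      rw [Finset.mem_powerset] at hT
      have hprimes : ∀ p ∈ T, 2 < p := fun p hp => (hPrmem p (hT hp)).2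
      have hmpos : 0 < ∏ p ∈ T, p := Finset.prod_pos (fun p hp => by
        have := hprimes p hp; omega)
      have hmR : (0 : ℝ) < ∏ p ∈ T, (p : ℝ) := by
        rw [← Nat.cast_prod]; exact_mod_cast hmpos
      have hw : 0 ≤ ∏ p ∈ T, (1 / ((p : ℝ) - 2)) := by
        apply Finset.prod_nonneg
        intro p hp
        have h3 : (3 : ℝ) ≤ (p : ℝ) := by exact_mod_cast hprimes p hp
        exact div_nonneg zero_le_one (by linarith)
      have hdiv : (((P / ∏ p ∈ T, p : ℕ)) : ℝ) ≤ X / (∏ p ∈ T, (p : ℝ)) := by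
        rw [le_div_iff₀ hmR]
        have h1 : ((P / ∏ p ∈ T, p : ℕ) : ℝ) * ((∏ p ∈ T, p : ℕ) : ℝ) ≤ (P : ℝ) := by
          exact_mod_cast Nat.div_mul_le_self P (∏ p ∈ T, p)
        rw [Nat.cast_prod] at h1
        linarith
      have hprodeq : ∏ p ∈ T, (1 / (((p : ℝ) - 2) * (p : ℝ)))
          = (∏ p ∈ T, (1 / ((p : ℝ) - 2))) / (∏ p ∈ T, (p : ℝ)) := by
        rw [← Finset.prod_div_distrib]
        exact Finset.prod_congr rfl (fun p _ => (div_div 1 _ _).symm)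
      calc (∏ p ∈ T, (1 / ((p : ℝ) - 2))) * (((P / ∏ p ∈ T, p : ℕ)) : ℝ)
          ≤ (∏ p ∈ T, (1 / ((p : ℝ) - 2))) * (X / (∏ p ∈ T, (p : ℝ))) :=
            mul_le_mul_of_nonneg_left hdiv hw
        _ = X * ((∏ p ∈ T, (1 / ((p : ℝ) - 2))) / (∏ p ∈ T, (p : ℝ))) := by ring
        _ = X * ∏ p ∈ T, (1 / (((p : ℝ) - 2) * (p : ℝ))) := by rw [hprodeq]
    calc ∑ T ∈ Pr.powerset, (∏ p ∈ T, (1 / ((p : ℝ) - 2)))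
          * (((P / ∏ p ∈ T, p : ℕ)) : ℝ)
        ≤ ∑ T ∈ Pr.powerset, X * ∏ p ∈ T, (1 / (((p : ℝ) - 2) * (p : ℝ))) :=
          Finset.sum_le_sum hterm
      _ = X * ∑ T ∈ Pr.powerset, ∏ p ∈ T, (1 / (((p : ℝ) - 2) * (p : ℝ))) := by
          rw [Finset.mul_sum]
      _ = X * ∏ p ∈ Pr, (1 / (((p : ℝ) - 2) * (p : ℝ)) + 1) := by
          rw [Finset.prod_add]
          congr 1
          apply Finset.sum_congr rfl
          intro t _
          rw [Finset.prod_const_one, mul_one]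
  -- euler factor identity
  have hH : ∏ p ∈ Pr, (1 / (((p : ℝ) - 2) * (p : ℝ)) + 1)
      = (∏ p ∈ Pr, (1 - 1 / ((p : ℝ) - 1) ^ 2))⁻¹ := by
    rw [← Finset.prod_inv_distrib]
    apply Finset.prod_congr rfl
    intro p hp
    have h3 : (3 : ℝ) ≤ (p : ℝ) := by exact_mod_cast (hPrmem p hp).2
    have h1 : ((p : ℝ) - 1) ≠ 0 := by linarith
    have h2 : ((p : ℝ) - 2) ≠ 0 := by linarith
    have h0 : (p : ℝ) ≠ 0 := by linarith
    apply eq_inv_of_mul_eq_one_left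
    field_simp
    ring
  -- compare with twinC
  have hI : twinC ≤ ∏ p ∈ Pr, (1 - 1 / ((p : ℝ) - 1) ^ 2) := by
    set s : Finset Nat.Primes := Pr.attach.map
      ⟨fun x => ⟨x.1, (hPrmem x.1 x.2).1⟩,
        fun a b h => by
          apply Subtype.ext
          have : ((⟨(a : ℕ), (hPrmem a.1 a.2).1⟩ : Nat.Primes) : ℕ)
              = ((⟨(b : ℕ), (hPrmem b.1 b.2).1⟩ : Nat.Primes) : ℕ) :=
            congrArg Subtype.val h
          exact this⟩ with hs
    have h := twinC_le_prod s
    rw [hs, Finset.prod_map] at h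
    calc twinC ≤ ∏ x ∈ Pr.attach, tcf ⟨x.1, (hPrmem x.1 x.2).1⟩ := h
      _ = ∏ p ∈ Pr, (1 - 1 / ((p : ℝ) - 1) ^ 2) := by
          rw [← Finset.prod_attach Pr (fun p => (1 - 1 / ((p : ℝ) - 1) ^ 2))]
          apply Finset.prod_congr rfl
          intro x _
          unfold tcf
          rw [if_pos (hPrmem x.1 x.2).2]
  have hfinal : X * (∏ p ∈ Pr, (1 - 1 / ((p : ℝ) - 1) ^ 2))⁻¹ ≤ X / twinC := by
    rw [div_eq_mul_inv]
    apply mul_le_mul_of_nonneg_left _ (by linarith : (0 : ℝ) ≤ X)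
    exact inv_anti₀ twinC_pos hI
  calc ∑ j ∈ Finset.Icc 1 P, ffun (2 * j)
      = ∑ T ∈ Pr.powerset, (∏ p ∈ T, (1 / ((p : ℝ) - 2)))
          * (((P / ∏ p ∈ T, p : ℕ)) : ℝ) := key
    _ ≤ X * ∏ p ∈ Pr, (1 / (((p : ℝ) - 2) * (p : ℝ)) + 1) := hbound
    _ = X * (∏ p ∈ Pr, (1 - 1 / ((p : ℝ) - 1) ^ 2))⁻¹ := by rw [hH]
    _ ≤ X / twinC := hfinal
end

section
/- Fix integers K ≥ 2, an even h with 1 ≤ h ≤ K−1, and an odd squarefree integer l ≥ 1, and set b = l / gcd(l, 2^h − 1) and M_l(h) = #{1 ≤ k₂ ≤ K−h : 2^{k₂}(2^h − 1) ≡ h (mod l)}. Then M_l(h) = 0 if gcd(l, 2^h − 1) ∤ h, and M_l(h) ≤ (K−h)/ord_b(2) + 1 if gcd(l, 2^h − 1) ∣ h. -/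
open Filter Finset Real

/-- for `K ≥ 2`, even `1 ≤ h ≤ K-1`, odd squarefree `l ≥ 1`, with
`b = l/gcd(l, 2^h-1)` and `M_l(h) = #{1 ≤ k₂ ≤ K-h : 2^{k₂}(2^h-1) ≡ h (mod l)}`:
`M_l(h) = 0` if `gcd(l, 2^h-1) ∤ h`, and `M_l(h) ≤ (K-h)/ord_b(2) + 1` otherwise. -/
theorem Ml_bound (K h l : ℕ) (hK : 2 ≤ K) (hhe : Even h) (hh1 : 1 ≤ h)
    (hh2 : h ≤ K - 1) (hl1 : 1 ≤ l) (hlodd : Odd l) (hlsq : Squarefree l) :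
    (¬ (Nat.gcd l (2 ^ h - 1) ∣ h) →
      ((Finset.Icc 1 (K - h)).filter
        (fun k₂ => 2 ^ k₂ * (2 ^ h - 1) ≡ h [MOD l])).card = 0) ∧
    ((Nat.gcd l (2 ^ h - 1) ∣ h) →
      (((Finset.Icc 1 (K - h)).filter
        (fun k₂ => 2 ^ k₂ * (2 ^ h - 1) ≡ h [MOD l])).card : ℝ)
        ≤ ((K : ℝ) - (h : ℝ)) /
            (orderOf (2 : ZMod (l / Nat.gcd l (2 ^ h - 1))) : ℝ) + 1) := by
  classical
  set g := Nat.gcd l (2 ^ h - 1) with hgdef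
  set b := l / g with hbdef
  have hlpos : 0 < l := hl1
  have hgl : g ∣ l := Nat.gcd_dvd_left _ _
  have hg2 : g ∣ 2 ^ h - 1 := Nat.gcd_dvd_right _ _
  have hgpos : 0 < g := Nat.gcd_pos_of_pos_left _ hlpos
  have hlgb : l = g * b := (Nat.mul_div_cancel' hgl).symm
  have hbl : b ∣ l := ⟨g, by rw [hlgb]; ring⟩
  have hbpos : 0 < b := Nat.div_pos (Nat.le_of_dvd hlpos hgl) hgpos
  haveI : NeZero b := ⟨hbpos.ne'⟩
  set S := (Finset.Icc 1 (K - h)).filter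
      (fun k₂ => 2 ^ k₂ * (2 ^ h - 1) ≡ h [MOD l]) with hSdef
  -- Part 1
  have part1 : ¬ (g ∣ h) → S.card = 0 := by
    intro hnd
    rw [Finset.card_eq_zero, Finset.filter_eq_empty_iff]
    intro k _ hmod
    apply hnd
    have h1 : 2 ^ k * (2 ^ h - 1) ≡ h [MOD g] := hmod.of_dvd hgl
    have h2 : 2 ^ k * (2 ^ h - 1) ≡ 0 [MOD g] :=
      (Nat.modEq_zero_iff_dvd).mpr (hg2.mul_left _)
    have := (h2.symm.trans h1)
    exact (Nat.modEq_zero_iff_dvd).mp this.symm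
  refine ⟨part1, fun hdvd => ?_⟩
  -- coprimality facts
  have hgb : Nat.Coprime g b := by
    have h := hlsq
    rw [hlgb] at h
    exact Nat.coprime_of_squarefree_mul h
  have hcop : Nat.Coprime (2 ^ h - 1) b := by
    have h1 : Nat.gcd (2 ^ h - 1) b ∣ g :=
      Nat.dvd_gcd ((Nat.gcd_dvd_right _ _).trans hbl) (Nat.gcd_dvd_left _ _)
    have h2 : Nat.gcd (2 ^ h - 1) b ∣ b := Nat.gcd_dvd_right _ _
    exact Nat.eq_one_of_dvd_coprimes hgb h1 h2
  have hbodd : Odd b := by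
    rcases Nat.even_or_odd b with he | ho
    · exfalso
      have : Even l := by rw [hlgb]; exact he.mul_left g
      exact (Nat.not_even_iff_odd.mpr hlodd) this
    · exact ho
  have h2cop : Nat.Coprime 2 b :=
    (Nat.prime_two.coprime_iff_not_dvd).mpr (by
      intro hdd; exact (Nat.not_even_iff_odd.mpr hbodd) (even_iff_two_dvd.mpr hdd))
  have hunit2 : IsUnit (2 : ZMod b) := by
    have := (ZMod.isUnit_iff_coprime 2 b).mpr h2cop
    simpa using this
  have hunitw : IsUnit ((2 ^ h - 1 : ℕ) : ZMod b) :=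
    (ZMod.isUnit_iff_coprime (2 ^ h - 1) b).mpr hcop
  set d := orderOf (2 : ZMod b) with hddef
  have hdpos : 0 < d := by
    obtain ⟨u, hu⟩ := hunit2
    rw [hddef, ← hu, orderOf_units]
    exact orderOf_pos u
  -- key divisibility: solutions differ by multiples of d
  have key : ∀ k₁ ∈ S, ∀ k₂ ∈ S, k₁ ≤ k₂ → d ∣ k₂ - k₁ := by
    intro k₁ hk₁ k₂ hk₂ hle
    have hm₁ : 2 ^ k₁ * (2 ^ h - 1) ≡ h [MOD l] := (Finset.mem_filter.mp hk₁).2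
    have hm₂ : 2 ^ k₂ * (2 ^ h - 1) ≡ h [MOD l] := (Finset.mem_filter.mp hk₂).2
    have hmb : 2 ^ k₁ * (2 ^ h - 1) ≡ 2 ^ k₂ * (2 ^ h - 1) [MOD b] :=
      (hm₁.trans hm₂.symm).of_dvd hbl
    have hz : ((2 ^ k₁ * (2 ^ h - 1) : ℕ) : ZMod b)
        = ((2 ^ k₂ * (2 ^ h - 1) : ℕ) : ZMod b) :=
      (ZMod.natCast_eq_natCast_iff _ _ _).mpr hmb
    push_cast at hz
    have hz2 : (2 : ZMod b) ^ k₁ = (2 : ZMod b) ^ k₂ :=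
      hunitw.mul_left_cancel (by rw [mul_comm ((2 ^ h - 1 : ℕ) : ZMod b),
        mul_comm ((2 ^ h - 1 : ℕ) : ZMod b)]; exact hz)
    have hz3 : (2 : ZMod b) ^ k₁ * (2 : ZMod b) ^ (k₂ - k₁) = (2 : ZMod b) ^ k₁ * 1 := by
      rw [mul_one, ← pow_add, Nat.add_sub_cancel' hle, hz2]
    have hz4 : (2 : ZMod b) ^ (k₂ - k₁) = 1 :=
      (hunit2.pow k₁).mul_right_cancel (by
        rw [mul_comm _ ((2:ZMod b) ^ k₁), mul_comm _ ((2:ZMod b) ^ k₁)]; exact hz3)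
    exact orderOf_dvd_of_pow_eq_one hz4
  -- count solutions
  have hKh : h + 1 ≤ K := by omega
  have hcard : S.card ≤ (K - h - 1) / d + 1 := by
    rcases S.eq_empty_or_nonempty with he | hne
    · simp [he]
    · set m := S.min' hne with hmdef
      have hmS : m ∈ S := S.min'_mem hne
      have hmmem := Finset.mem_filter.mp hmS
      have hm1 : 1 ≤ m := (Finset.mem_Icc.mp hmmem.1).1
      have hcard2 : S.card ≤ (Finset.range ((K - h - 1) / d + 1)).card := by
        apply Finset.card_le_card_of_injOn (fun k => (k - m) / d)
        · intro k hk
          have hkmem := Finset.mem_filter.mp hk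
          have hk2 : k ≤ K - h := (Finset.mem_Icc.mp hkmem.1).2
          have : (k - m) / d ≤ (K - h - 1) / d :=
            Nat.div_le_div_right (by omega)
          simp only [Finset.mem_coe, Finset.mem_range]
          omega
        · intro k₁ hk₁ k₂ hk₂ heq
          have heq' : (k₁ - m) / d = (k₂ - m) / d := heq
          have hmk₁ : m ≤ k₁ := S.min'_le _ hk₁
          have hmk₂ : m ≤ k₂ := S.min'_le _ hk₂
          have hd₁ : d ∣ k₁ - m := key m hmS k₁ hk₁ hmk₁
          have hd₂ : d ∣ k₂ - m := key m hmS k₂ hk₂ hmk₂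
          have e₁ : d * ((k₁ - m) / d) = k₁ - m := Nat.mul_div_cancel' hd₁
          have e₂ : d * ((k₂ - m) / d) = k₂ - m := Nat.mul_div_cancel' hd₂
          rw [heq'] at e₁
          omega
      simpa using hcard2
  -- convert to reals
  have hdR : (0 : ℝ) < d := by exact_mod_cast hdpos
  have hcast : ((K - h : ℕ) : ℝ) = (K : ℝ) - (h : ℝ) := by
    have : h ≤ K := by omega
    push_cast [this]; ring
  calc (S.card : ℝ) ≤ (((K - h - 1) / d + 1 : ℕ) : ℝ) := by exact_mod_cast hcard
    _ = (((K - h - 1) / d : ℕ) : ℝ) + 1 := by push_cast; ring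
    _ ≤ ((K - h - 1 : ℕ) : ℝ) / (d : ℝ) + 1 := by
        gcongr
        exact Nat.cast_div_le
    _ ≤ ((K : ℝ) - (h : ℝ)) / (d : ℝ) + 1 := by
        have h1 : ((K - h - 1 : ℕ) : ℝ) ≤ (K : ℝ) - (h : ℝ) := by
          rw [← hcast]; exact_mod_cast Nat.sub_le _ _
        gcongr
end

section
/- For each fixed prime P > 2, as K → ∞, (1/|I_K|) ∑_{(k₂,h)∈I_K} f_P(d(k₂,h)) = ∏_{2<p≤P} (1 + 1/(p(p−2))) + O_P(1/K). -/
open Filter Finset Real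

section AuxAverageFP


section PeriodicCount
variable (p : ℕ → Prop) [DecidablePred p]

lemma shift_count (m : ℕ) (hp : ∀ h, p (h + m) ↔ p h) (a b : ℕ) :
    ((Finset.Ico (a + m) (b + m)).filter p).card = ((Finset.Ico a b).filter p).card := by
  have himg : Finset.Ico (a + m) (b + m) = (Finset.Ico a b).image (· + m) := by
    rw [Finset.image_add_right_Ico]
  rw [himg, Finset.filter_image, Finset.card_image_of_injective _ (add_left_injective m)]
  congr 1
  exact Finset.filter_congr (fun x _ => by simp [hp x])

lemma block_count (m : ℕ) (hp : ∀ h, p (h + m) ↔ p h) (k : ℕ) :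
    ((Finset.Ico (k * m) (k * m + m)).filter p).card = ((Finset.range m).filter p).card := by
  induction k with
  | zero => rw [Finset.range_eq_Ico]; norm_num
  | succ k ih =>
      have : (k + 1) * m = k * m + m := by ring
      rw [this, ← ih]
      exact shift_count p m hp (k * m) (k * m + m)

lemma window_count (m : ℕ) (hp : ∀ h, p (h + m) ↔ p h) (k : ℕ) :
    ((Finset.range (k * m)).filter p).card = k * ((Finset.range m).filter p).card := by
  induction k with
  | zero => simp
  | succ k ih =>
      have hsplit : Finset.range ((k + 1) * m) =
          Finset.range (k * m) ∪ Finset.Ico (k * m) (k * m + m) := by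
        rw [Finset.range_eq_Ico, Finset.range_eq_Ico,
          Finset.Ico_union_Ico_eq_Ico (Nat.zero_le _) (Nat.le_add_right _ _)]
        congr 1
        ring
      rw [hsplit, Finset.filter_union, Finset.card_union_of_disjoint, ih,
        block_count p m hp k]
      · ring
      · exact Finset.disjoint_filter_filter (by rw [Finset.range_eq_Ico]; exact Finset.Ico_disjoint_Ico_consecutive 0 (k*m) (k*m+m))

end PeriodicCount

section LinearCongruence

lemma count_residue (e' r g : ℕ) (he : 0 < e') :
    ((Finset.range (g * e')).filter (fun j => j ≡ r [MOD e'])).card = g := by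
  have hadd : ∀ j : ℕ, j + e' ≡ j [MOD e'] := fun j => Nat.add_modEq_right
  have hper : ∀ j, ((j + e') ≡ r [MOD e']) ↔ (j ≡ r [MOD e']) :=
    fun j => ⟨fun h => (hadd j).symm.trans h, fun h => (hadd j).trans h⟩
  rw [window_count _ e' hper g]
  have : (Finset.range e').filter (fun j => j ≡ r [MOD e']) = {r % e'} := by
    ext j
    rw [Finset.mem_filter, Finset.mem_range, Finset.mem_singleton]
    unfold Nat.ModEq
    constructor
    · rintro ⟨hj, hm⟩; rw [← hm, Nat.mod_eq_of_lt hj]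
    · rintro rfl; exact ⟨Nat.mod_lt _ he, Nat.mod_mod_of_dvd r dvd_rfl⟩
  rw [this]; simp

end LinearCongruence


lemma solvable (e s A B : ℕ) (he : 0 < e) (H : A ≡ B [MOD Nat.gcd s e]) :
    ∃ j : ℕ, A ≡ B + s * j [MOD e] := by
  set g := Nat.gcd s e with hg
  have hgd : ((g : ℤ)) ∣ (A : ℤ) - B := Int.ModEq.dvd ((Int.natCast_modEq_iff).mpr H).symm
  obtain ⟨t, ht⟩ := hgd
  have hbez : (g : ℤ) = s * Nat.gcdA s e + e * Nat.gcdB s e := Nat.gcd_eq_gcd_ab s e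
  set x : ℤ := Nat.gcdA s e * t with hx
  have key : (B : ℤ) + s * x - A = e * (-(Nat.gcdB s e * t)) := by
    rw [hx]; linear_combination -ht - t * hbez
  have hmod : (A : ℤ) ≡ B + s * x [ZMOD e] := Int.modEq_iff_dvd.mpr ⟨_, key⟩
  set j : ℕ := (x % e).toNat with hj
  have hxe : ((j : ℤ)) = x % e := by
    rw [hj, Int.toNat_of_nonneg (Int.emod_nonneg x (by exact_mod_cast he.ne'))]
  have hjx : (j : ℤ) ≡ x [ZMOD e] := by
    rw [hxe]; exact Int.emod_emod_of_dvd x dvd_rfl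
  refine ⟨j, ?_⟩
  have : (A : ℤ) ≡ B + s * j [ZMOD e] := hmod.trans ((Int.ModEq.mul_left s hjx.symm).add_left B)
  have := (Int.natCast_modEq_iff (n := e)).mp (by push_cast; exact this)
  exact this

lemma count_lin (e s A B : ℕ) (he : 0 < e) :
    ((Finset.range e).filter (fun j => A ≡ B + s * j [MOD e])).card
      = if A ≡ B [MOD Nat.gcd s e] then Nat.gcd s e else 0 := by
  set g := Nat.gcd s e with hg
  have hge : g ∣ e := Nat.gcd_dvd_right s e
  have hgs : g ∣ s := Nat.gcd_dvd_left s e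
  have hgpos : 0 < g := Nat.gcd_pos_of_pos_right s he
  by_cases H : A ≡ B [MOD g]
  · rw [if_pos H]
    obtain ⟨j₀, hj₀⟩ := solvable e s A B he H
    set e' : ℕ := e / g with he'
    have hee : e = g * e' := by rw [he', Nat.mul_div_cancel' hge]
    have he'pos : 0 < e' := Nat.div_pos (Nat.le_of_dvd he hge) hgpos
    have hs' : s * e' % e = 0 := by
      obtain ⟨s', hs'⟩ := hgs
      have : s * e' = e * s' := by rw [hs', hee]; ring
      simp [this, Nat.mul_mod_right]
    have hiff : ∀ j, (A ≡ B + s * j [MOD e]) ↔ (j ≡ j₀ [MOD e']) := by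
      intro j
      constructor
      · intro h
        have h2 : B + s * j ≡ B + s * j₀ [MOD e] := h.symm.trans hj₀
        have h3 : s * j ≡ s * j₀ [MOD e] := Nat.ModEq.add_left_cancel' B h2
        have h4 := Nat.ModEq.cancel_left_div_gcd he h3
        have : e.gcd s = g := Nat.gcd_comm e s ▸ rfl
        rwa [this] at h4
      · intro h
        have h2 : s * j ≡ s * j₀ [MOD s * e'] := Nat.ModEq.mul_left' (c := s) h
        have h3 : e ∣ s * e' := by
          obtain ⟨s', hs'⟩ := hgs
          exact ⟨s', by rw [hs', hee]; ring⟩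
        have h4 : s * j ≡ s * j₀ [MOD e] := h2.of_dvd h3
        exact hj₀.trans ((h4.add_left B).symm)
    have : (Finset.range e).filter (fun j => A ≡ B + s * j [MOD e])
        = (Finset.range (g * e')).filter (fun j => j ≡ j₀ [MOD e']) := by
      rw [← hee]
      exact Finset.filter_congr (fun j _ => by simp [hiff j])
    rw [this, count_residue _ j₀ g he'pos]
  · rw [if_neg H]
    rw [Finset.card_eq_zero, Finset.filter_eq_empty_iff]
    intro j _
    intro hcon
    apply H
    have h1 : A ≡ B + s * j [MOD g] := hcon.of_dvd hge
    have h2 : B + s * j ≡ B + 0 [MOD g] := by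
      refine Nat.ModEq.add_left B ?_
      exact (Nat.modEq_zero_iff_dvd).mpr (Dvd.dvd.mul_right hgs j)
    simpa using h1.trans h2

lemma split_count (u e : ℕ) (P : ℕ → Prop) [DecidablePred P] :
    ((Finset.range (u * e)).filter P).card
      = ∑ a ∈ Finset.range u, ((Finset.range e).filter (fun j => P (a + u * j))).card := by
  rw [Finset.card_filter]
  rw [Finset.sum_congr rfl (fun a (_ : a ∈ Finset.range u) =>
    Finset.card_filter (fun j => P (a + u * j)) (Finset.range e))]
  rw [← Finset.sum_product']
  apply Finset.sum_nbij' (i := fun h => (h % u, h / u)) (j := fun q => q.1 + u * q.2)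
  · intro h hh
    simp only [Finset.mem_range] at hh
    have hu : 0 < u := by
      rcases Nat.eq_zero_or_pos u with h0 | h0
      · simp [h0] at hh
      · exact h0
    simp only [Finset.mem_product, Finset.mem_range]
    exact ⟨Nat.mod_lt _ hu, Nat.div_lt_iff_lt_mul hu |>.mpr (by rwa [mul_comm])⟩
  · intro q hq
    simp only [Finset.mem_product, Finset.mem_range] at hq
    simp only [Finset.mem_range]
    calc q.1 + u * q.2 < u + u * q.2 := by omega
      _ = u * (q.2 + 1) := by ring
      _ ≤ u * e := Nat.mul_le_mul_left u hq.2
  · intro h _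
    simp [Nat.mod_add_div]
  · intro q hq
    simp only [Finset.mem_product, Finset.mem_range] at hq
    have h1 : (q.1 + u * q.2) % u = q.1 := by
      rw [Nat.add_mul_mod_self_left, Nat.mod_eq_of_lt hq.1]
    have h2 : (q.1 + u * q.2) / u = q.2 := by
      rw [Nat.add_mul_div_left _ _ (by omega : 0 < u), Nat.div_eq_of_lt hq.1]
      omega
    simp [h1, h2]
  · intro h _
    simp [Nat.mod_add_div]

lemma modeq_congr {n a a' b b' : ℕ} (ha : a ≡ a' [MOD n]) (hb : b ≡ b' [MOD n]) :
    (a ≡ b [MOD n]) ↔ (a' ≡ b' [MOD n]) :=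
  ⟨fun h => (ha.symm.trans h).trans hb, fun h => (ha.trans h).trans hb.symm⟩

lemma coprime_two (e : ℕ) (he : Odd e) : Nat.Coprime 2 e :=
  (Nat.prime_two.coprime_iff_not_dvd).mpr (by
    rw [Nat.two_dvd_ne_zero]; exact Nat.odd_iff.mp he)

lemma ord_cast_pow_eq_one (e : ℕ) : ((2 : ZMod e)) ^ orderOf (2 : ZMod e) = 1 :=
  pow_orderOf_eq_one _

lemma ord_modeq (e : ℕ) : 2 ^ orderOf (2 : ZMod e) ≡ 1 [MOD e] := by
  rw [← ZMod.natCast_eq_natCast_iff]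
  push_cast
  exact ord_cast_pow_eq_one e

lemma pow_totient_zmod (e : ℕ) (he : Odd e) : (2 : ZMod e) ^ e.totient = 1 := by
  have h := Nat.ModEq.pow_totient (coprime_two e he)
  have := (ZMod.natCast_eq_natCast_iff _ _ e).mpr h
  push_cast at this
  exact this

lemma ord_pos (e : ℕ) (he : Odd e) : 0 < orderOf (2 : ZMod e) := by
  have hepos : 0 < e := he.pos
  refine orderOf_pos_iff.mpr (isOfFinOrder_iff_pow_eq_one.mpr ⟨e.totient, Nat.totient_pos.mpr hepos, pow_totient_zmod e he⟩)

lemma ord_lt (e : ℕ) (he : Odd e) (h1 : 1 < e) : orderOf (2 : ZMod e) < e := by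
  have hd : orderOf (2 : ZMod e) ∣ e.totient := orderOf_dvd_of_pow_eq_one (pow_totient_zmod e he)
  have := Nat.le_of_dvd (Nat.totient_pos.mpr (by omega)) hd
  exact lt_of_le_of_lt this (Nat.totient_lt e h1)

lemma PP : ∀ e : ℕ, Odd e → ∀ c : ℕ,
    ((Finset.range (2 * orderOf (2 : ZMod e) * e)).filter
      (fun h => Even h ∧ c * 2 ^ h ≡ h + c [MOD e])).card = orderOf (2 : ZMod e) := by
  intro e
  induction e using Nat.strong_induction_on with
  | _ e ih =>
  intro he c
  have hepos : 0 < e := he.pos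
  rcases eq_or_lt_of_le (show 1 ≤ e from hepos) with h1 | h1
  · -- e = 1
    have he1 : e = 1 := h1.symm
    subst he1
    have hT : orderOf (2 : ZMod 1) = 1 := by
      have : (2 : ZMod 1) = 1 := Subsingleton.elim _ _
      rw [this, orderOf_one]
    rw [hT]
    have : (Finset.range (2 * 1 * 1)).filter
        (fun h => Even h ∧ c * 2 ^ h ≡ h + c [MOD 1]) = {0} := by
      ext h
      simp only [Finset.mem_filter, Finset.mem_range, Finset.mem_singleton, Nat.modEq_one,
        and_true]
      constructor
      · rintro ⟨hh, heven⟩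
        rcases heven with ⟨k, hk⟩
        omega
      · rintro rfl
        exact ⟨by norm_num, Even.zero⟩
    rw [this]; simp
  · -- e ≥ 2
    set T := orderOf (2 : ZMod e) with hT
    have hTpos : 0 < T := ord_pos e he
    have h2T : 2 ^ T ≡ 1 [MOD e] := ord_modeq e
    have hTlt : T < e := ord_lt e he h1
    set g := Nat.gcd (2 * T) e with hg
    have hge : g ∣ e := Nat.gcd_dvd_right _ _
    have hg2T : g ∣ 2 * T := Nat.gcd_dvd_left _ _
    have hgodd : Odd g := by
      rcases Nat.even_or_odd g with hev | hod
      · exfalso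
        have h2g : 2 ∣ g := hev.two_dvd
        exact (Nat.two_dvd_ne_zero.mpr (Nat.odd_iff.mp he)) (dvd_trans h2g hge)
      · exact hod
    have hgpos : 0 < g := hgodd.pos
    have hgT : g ∣ T := (Nat.Coprime.dvd_of_dvd_mul_left ((coprime_two g hgodd).symm) hg2T)
    have hglt : g < e := lt_of_le_of_lt (Nat.le_of_dvd hTpos hgT) hTlt
    set Tg := orderOf (2 : ZMod g) with hTg
    have hTgpos : 0 < Tg := ord_pos g hgodd
    have h2Tg : 2 ^ Tg ≡ 1 [MOD g] := ord_modeq g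
    -- split the count
    rw [split_count (2 * T) e (fun h => Even h ∧ c * 2 ^ h ≡ h + c [MOD e])]
    -- inner counts
    have hinner : ∀ a ∈ Finset.range (2 * T),
        ((Finset.range e).filter
          (fun j => Even (a + (2 * T) * j) ∧ c * 2 ^ (a + (2 * T) * j) ≡ (a + (2 * T) * j) + c [MOD e])).card
        = if (Even a ∧ c * 2 ^ a ≡ a + c [MOD g]) then g else 0 := by
      intro a _
      have hparity : ∀ j : ℕ, Even (a + (2 * T) * j) ↔ Even a := by
        intro j
        have : Even ((2 * T) * j) := by exact (even_two_mul T).mul_right j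
        simp [Nat.even_add, this]
      have hpow : ∀ j : ℕ, c * 2 ^ (a + (2 * T) * j) ≡ c * 2 ^ a [MOD e] := by
        intro j
        have h1' : 2 ^ ((2 * T) * j) ≡ 1 [MOD e] := by
          have : (2 : ℕ) ^ ((2 * T) * j) = (2 ^ T) ^ (2 * j) := by
            rw [← pow_mul]; ring_nf
          rw [this]
          simpa using h2T.pow (2 * j)
        calc c * 2 ^ (a + (2 * T) * j) = (c * 2 ^ a) * 2 ^ ((2 * T) * j) := by
              rw [pow_add]; ring
          _ ≡ (c * 2 ^ a) * 1 [MOD e] := h1'.mul_left _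
          _ = c * 2 ^ a := by ring
      have hiff : ∀ j : ℕ,
          (Even (a + (2 * T) * j) ∧ c * 2 ^ (a + (2 * T) * j) ≡ (a + (2 * T) * j) + c [MOD e])
          ↔ (Even a ∧ c * 2 ^ a ≡ (a + c) + (2 * T) * j [MOD e]) := by
        intro j
        rw [hparity j]
        have harr : (a + (2 * T) * j) + c = (a + c) + (2 * T) * j := by ring
        rw [harr]
        exact and_congr_right (fun _ => modeq_congr (hpow j) (Nat.ModEq.refl _))
      by_cases hEa : Even a
      · have hflt : (Finset.range e).filter
            (fun j => Even (a + (2 * T) * j) ∧ c * 2 ^ (a + (2 * T) * j) ≡ (a + (2 * T) * j) + c [MOD e])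
            = (Finset.range e).filter (fun j => (c * 2 ^ a) ≡ (a + c) + (2 * T) * j [MOD e]) := by
          refine Finset.filter_congr (fun j _ => ?_)
          rw [hiff j]
          simp [hEa]
        rw [hflt, count_lin e (2 * T) (c * 2 ^ a) (a + c) hepos]
        simp [hEa, ← hg]
      · have hflt : (Finset.range e).filter
            (fun j => Even (a + (2 * T) * j) ∧ c * 2 ^ (a + (2 * T) * j) ≡ (a + (2 * T) * j) + c [MOD e])
            = ∅ := by
          rw [Finset.filter_eq_empty_iff]
          intro j _
          rw [hiff j]
          tauto
        rw [hflt, if_neg (by tauto)]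
        simp
    rw [Finset.sum_congr rfl hinner]
    have hsum : ∑ a ∈ Finset.range (2 * T), (if (Even a ∧ c * 2 ^ a ≡ a + c [MOD g]) then g else 0)
        = g * ((Finset.range (2 * T)).filter (fun a => Even a ∧ c * 2 ^ a ≡ a + c [MOD g])).card := by
      rw [← Finset.sum_filter, Finset.sum_const, smul_eq_mul, mul_comm]
    rw [hsum]
    set A₂ := ((Finset.range (2 * T)).filter (fun a => Even a ∧ c * 2 ^ a ≡ a + c [MOD g])).card with hA₂
    -- periodicity helper
    have keyper : ∀ (m : ℕ), Even m → 2 ^ m ≡ 1 [MOD g] → (g ∣ m) → ∀ a,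
        ((Even (a + m) ∧ c * 2 ^ (a + m) ≡ (a + m) + c [MOD g]) ↔
          (Even a ∧ c * 2 ^ a ≡ a + c [MOD g])) := by
      intro m hmev hmpow hmdvd a
      have hp : Even (a + m) ↔ Even a := by simp [Nat.even_add, hmev]
      rw [hp]
      refine and_congr_right (fun _ => modeq_congr ?_ ?_)
      · calc c * 2 ^ (a + m) = (c * 2 ^ a) * 2 ^ m := by rw [pow_add]; ring
          _ ≡ (c * 2 ^ a) * 1 [MOD g] := hmpow.mul_left _
          _ = c * 2 ^ a := by ring
      · have : a + m + c ≡ a + 0 + c [MOD g] :=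
          Nat.ModEq.add_right c (Nat.ModEq.add_left a ((Nat.modEq_zero_iff_dvd).mpr hmdvd))
        simpa using this
    have hm1 : ∀ a, (Even (a + 2 * Tg * g) ∧ c * 2 ^ (a + 2 * Tg * g) ≡ (a + 2 * Tg * g) + c [MOD g]) ↔
        (Even a ∧ c * 2 ^ a ≡ a + c [MOD g]) := by
      refine keyper (2 * Tg * g) ?_ ?_ ⟨2 * Tg, by ring⟩
      · exact (even_two_mul Tg).mul_right g
      · have : (2 : ℕ) ^ (2 * Tg * g) = (2 ^ Tg) ^ (2 * g) := by rw [← pow_mul]; ring_nf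
        rw [this]
        simpa using h2Tg.pow (2 * g)
    have hm2 : ∀ a, (Even (a + 2 * T) ∧ c * 2 ^ (a + 2 * T) ≡ (a + 2 * T) + c [MOD g]) ↔
        (Even a ∧ c * 2 ^ a ≡ a + c [MOD g]) := by
      refine keyper (2 * T) (even_two_mul T) ?_ hg2T
      have : (2 : ℕ) ^ (2 * T) = (2 ^ T) ^ 2 := by rw [← pow_mul]; ring_nf
      rw [this]
      simpa using (h2T.of_dvd hge).pow 2
    have hIH : ((Finset.range (2 * Tg * g)).filter
        (fun a => Even a ∧ c * 2 ^ a ≡ a + c [MOD g])).card = Tg := ih g hglt hgodd c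
    have w1 := window_count (fun a => Even a ∧ c * 2 ^ a ≡ a + c [MOD g]) (2 * Tg * g) hm1 (2 * T)
    have w2 := window_count (fun a => Even a ∧ c * 2 ^ a ≡ a + c [MOD g]) (2 * T) hm2 (2 * Tg * g)
    rw [hIH] at w1
    rw [← hA₂] at w2
    have hcomm : (2 * T) * (2 * Tg * g) = (2 * Tg * g) * (2 * T) := by ring
    rw [hcomm] at w1
    rw [w2] at w1
    -- w1 : (2 * Tg * g) * A₂ = 2 * T * Tg
    have : (2 * Tg) * (g * A₂) = (2 * Tg) * T := by
      calc (2 * Tg) * (g * A₂) = (2 * Tg * g) * A₂ := by ring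
        _ = 2 * T * Tg := w1
        _ = (2 * Tg) * T := by ring
    have := Nat.eq_of_mul_eq_mul_left (by positivity) this
    omega




lemma Qper (e c m : ℕ) (hmev : Even m) (hmpow : 2 ^ m ≡ 1 [MOD e]) (hmdvd : e ∣ m) (a : ℕ) :
    (Even (a + m) ∧ c * 2 ^ (a + m) ≡ (a + m) + c [MOD e]) ↔
      (Even a ∧ c * 2 ^ a ≡ a + c [MOD e]) := by
  have hp : Even (a + m) ↔ Even a := by simp [Nat.even_add, hmev]
  rw [hp]
  refine and_congr_right (fun _ => modeq_congr ?_ ?_)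
  · calc c * 2 ^ (a + m) = (c * 2 ^ a) * 2 ^ m := by rw [pow_add]; ring
      _ ≡ (c * 2 ^ a) * 1 [MOD e] := hmpow.mul_left _
      _ = c * 2 ^ a := by ring
  · have : a + m + c ≡ a + 0 + c [MOD e] :=
      Nat.ModEq.add_right c (Nat.ModEq.add_left a ((Nat.modEq_zero_iff_dvd).mpr hmdvd))
    simpa using this

lemma dd_iff (e k₂ h : ℕ) :
    e ∣ dd k₂ h ↔ 2 ^ k₂ * 2 ^ h ≡ h + 2 ^ k₂ [MOD e] := by
  have hx : 1 ≤ 2 ^ h := Nat.one_le_two_pow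
  have hmul : 2 ^ k₂ * (2 ^ h - 1) + 2 ^ k₂ = 2 ^ k₂ * 2 ^ h := by
    have h1 : 2 ^ k₂ * (2 ^ h - 1) = 2 ^ k₂ * 2 ^ h - 2 ^ k₂ := by
      rw [Nat.mul_sub]; simp
    have h2 : 2 ^ k₂ ≤ 2 ^ k₂ * 2 ^ h := Nat.le_mul_of_pos_right _ (by positivity)
    omega
  have hh : h ≤ 2 ^ k₂ * (2 ^ h - 1) := by
    have h1 : h ≤ 2 ^ h - 1 := by
      have := @Nat.lt_two_pow_self h
      omega
    calc h ≤ 2 ^ h - 1 := h1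
      _ ≤ 2 ^ k₂ * (2 ^ h - 1) := Nat.le_mul_of_pos_left _ (by positivity)
  rw [dd, ← Nat.modEq_iff_dvd' hh]
  constructor
  · intro hmod
    have := hmod.add_right (2 ^ k₂)
    rw [hmul] at this
    exact this.symm
  · intro hmod
    have := hmod.symm
    rw [← hmul] at this
    exact Nat.ModEq.add_right_cancel' _ this

set_option maxHeartbeats 1000000 in
lemma cnt_bound (e c n : ℕ) (he : Odd e) :
    |(((Finset.Icc 1 n).filter (fun h => Even h ∧ c * 2 ^ h ≡ h + c [MOD e])).card : ℝ)
      - n / (2 * e)| ≤ 2 * orderOf (2 : ZMod e) * e + 2 := by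
  set T := orderOf (2 : ZMod e) with hT
  set M := 2 * T * e with hM
  have hepos : 0 < e := he.pos
  have hTpos : 0 < T := ord_pos e he
  have hMpos : 0 < M := by positivity
  set Q : ℕ → Prop := fun h => Even h ∧ c * 2 ^ h ≡ h + c [MOD e] with hQ
  have hper : ∀ a, Q (a + M) ↔ Q a := by
    intro a
    refine Qper e c M ?_ ?_ ⟨2 * T, by rw [hM]; ring⟩ a
    · have : M = 2 * (T * e) := by rw [hM]; ring
      rw [this]; exact even_two_mul _
    · have : (2 : ℕ) ^ M = (2 ^ T) ^ (2 * e) := by rw [← pow_mul, hM]; ring_nf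
      rw [this]
      simpa using (ord_modeq e).pow (2 * e)
  have hwin : ∀ k : ℕ, ((Finset.range (k * M)).filter Q).card = k * T := by
    intro k
    rw [window_count Q M hper k]
    congr 1
    exact PP e he c
  have hmono : ∀ {a b : ℕ}, a ≤ b → ((Finset.range a).filter Q).card ≤ ((Finset.range b).filter Q).card :=
    fun hab => Finset.card_le_card (Finset.filter_subset_filter _ (Finset.range_subset_range.mpr hab))
  set k := (n + 1) / M with hk
  have hdm : M * k + (n + 1) % M = n + 1 := Nat.div_add_mod (n + 1) M
  have hmlt := Nat.mod_lt (n + 1) hMpos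
  have hlow : k * M ≤ n + 1 := by rw [mul_comm]; omega
  have hhigh : n + 1 ≤ (k + 1) * M := by
    have hexp : (k + 1) * M = M * k + M := by ring
    omega
  have hcl : k * T ≤ ((Finset.range (n + 1)).filter Q).card := by
    rw [← hwin k]; exact hmono hlow
  have hcu : ((Finset.range (n + 1)).filter Q).card ≤ (k + 1) * T := by
    rw [← hwin (k + 1)]; exact hmono hhigh
  -- relate Icc 1 n to range (n+1)
  have hQ0 : Q 0 := ⟨Even.zero, by simp [Nat.ModEq.refl]⟩
  have hIcc : Finset.Icc 1 n = (Finset.range (n + 1)).erase 0 := by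
    ext x
    simp only [Finset.mem_Icc, Finset.mem_erase, Finset.mem_range]
    omega
  have hcard : ((Finset.Icc 1 n).filter Q).card = ((Finset.range (n + 1)).filter Q).card - 1 := by
    rw [hIcc, Finset.filter_erase, Finset.card_erase_of_mem]
    exact Finset.mem_filter.mpr ⟨Finset.mem_range.mpr (by omega), hQ0⟩
  have hge1 : 1 ≤ ((Finset.range (n + 1)).filter Q).card := by
    exact Finset.card_pos.mpr ⟨0, Finset.mem_filter.mpr ⟨Finset.mem_range.mpr (by omega), hQ0⟩⟩
  -- now real estimates
  have hden : (0 : ℝ) < 2 * e := by positivity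
  have hMr : (M : ℝ) = 2 * T * e := by rw [hM]; push_cast; ring
  have he2 : (2 : ℝ) ≤ 2 * e := by
    have : (1:ℝ) ≤ (e:ℝ) := by exact_mod_cast hepos
    nlinarith
  have e1 : (k : ℝ) * T * (2 * e) = k * M := by rw [hMr]; ring
  have e2 : (T : ℝ) * (2 * e) = M := by rw [hMr]; ring
  have hub : (n : ℝ) / (2 * e) ≤ k * T + T := by
    rw [div_le_iff₀ hden]
    have h1 : (n : ℝ) ≤ k * M + M - 1 := by
      have : (n : ℝ) + 1 ≤ (k + 1) * M := by exact_mod_cast hhigh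
      nlinarith
    nlinarith [e1, e2]
  have hlb : (k : ℝ) * T - 1 ≤ (n : ℝ) / (2 * e) := by
    rw [le_div_iff₀ hden]
    have h1 : (k : ℝ) * M - 1 ≤ n := by
      have : (k : ℝ) * M ≤ n + 1 := by exact_mod_cast hlow
      nlinarith
    nlinarith [e1, e2, he2]
  have hcr : (((Finset.Icc 1 n).filter Q).card : ℝ)
      = (((Finset.range (n + 1)).filter Q).card : ℝ) - 1 := by
    rw [hcard, Nat.cast_sub hge1]
    norm_num
  have hclr : (k : ℝ) * T ≤ (((Finset.range (n + 1)).filter Q).card : ℝ) := by exact_mod_cast hcl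
  have hcur : (((Finset.range (n + 1)).filter Q).card : ℝ) ≤ (k + 1) * T := by exact_mod_cast hcu
  have hTM : (T : ℝ) ≤ M := by
    rw [hMr]
    have h1 : (0:ℝ) < (T:ℝ) := by exact_mod_cast hTpos
    have h2 : (1:ℝ) ≤ (e:ℝ) := by exact_mod_cast hepos
    nlinarith
  rw [abs_le]
  constructor
  · rw [hcr]
    have hc1 : (k:ℝ) * T + 1 ≤ (k + 1 : ℝ) * T + 1 := by nlinarith [(by exact_mod_cast hTpos.le : (0:ℝ) ≤ (T:ℝ)), (by exact_mod_cast (Nat.zero_le k) : (0:ℝ) ≤ (k:ℝ))]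
    linarith [hclr, hub, hTM]
  · rw [hcr]
    linarith [hcur, hlb, hTM]

lemma NS_eq (e K : ℕ) :
    ((IK K).filter (fun q => e ∣ dd q.1 q.2)).card
      = ∑ k₂ ∈ Finset.Icc 1 K,
          ((Finset.Icc 1 (K - k₂)).filter (fun h => Even h ∧ e ∣ dd k₂ h)).card := by
  rw [IK, Finset.filter_filter, Finset.card_filter, Finset.sum_product]
  refine Finset.sum_congr rfl (fun k₂ hk₂ => ?_)
  rw [← Finset.card_filter]
  congr 1
  ext h
  simp only [Finset.mem_filter, Finset.mem_Icc] at *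
  constructor
  · rintro ⟨⟨h1, h2⟩, ⟨hev, h3, h4⟩, h5⟩
    exact ⟨⟨h1, by omega⟩, hev, h5⟩
  · rintro ⟨⟨h1, h2⟩, hev, h5⟩
    exact ⟨⟨h1, by omega⟩, ⟨hev, by omega, by omega⟩, h5⟩

lemma cnt_bound_dd (e k₂ n : ℕ) (he : Odd e) :
    |(((Finset.Icc 1 n).filter (fun h => Even h ∧ e ∣ dd k₂ h)).card : ℝ)
      - n / (2 * e)| ≤ 2 * orderOf (2 : ZMod e) * e + 2 := by
  have hflt : (Finset.Icc 1 n).filter (fun h => Even h ∧ e ∣ dd k₂ h)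
      = (Finset.Icc 1 n).filter (fun h => Even h ∧ 2 ^ k₂ * 2 ^ h ≡ h + 2 ^ k₂ [MOD e]) := by
    refine Finset.filter_congr (fun h _ => ?_)
    rw [dd_iff]
  rw [hflt]
  exact cnt_bound e (2 ^ k₂) n he

lemma NS_bound (e K : ℕ) (he : Odd e) :
    |(((IK K).filter (fun q => e ∣ dd q.1 q.2)).card : ℝ)
      - (∑ k₂ ∈ Finset.Icc 1 K, ((K - k₂ : ℕ) : ℝ)) / (2 * e)|
      ≤ K * (2 * orderOf (2 : ZMod e) * e + 2) := by
  rw [NS_eq]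
  have hZ : (∑ k₂ ∈ Finset.Icc 1 K, ((K - k₂ : ℕ) : ℝ)) / (2 * e)
      = ∑ k₂ ∈ Finset.Icc 1 K, ((K - k₂ : ℕ) : ℝ) / (2 * e) := Finset.sum_div _ _ _
  rw [hZ]
  rw [Nat.cast_sum]
  rw [← Finset.sum_sub_distrib]
  calc |∑ k₂ ∈ Finset.Icc 1 K,
      ((((Finset.Icc 1 (K - k₂)).filter (fun h => Even h ∧ e ∣ dd k₂ h)).card : ℝ)
        - ((K - k₂ : ℕ) : ℝ) / (2 * e))|
      ≤ ∑ k₂ ∈ Finset.Icc 1 K,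
        |(((Finset.Icc 1 (K - k₂)).filter (fun h => Even h ∧ e ∣ dd k₂ h)).card : ℝ)
          - ((K - k₂ : ℕ) : ℝ) / (2 * e)| := Finset.abs_sum_le_sum_abs _ _
    _ ≤ ∑ k₂ ∈ Finset.Icc 1 K, (2 * (orderOf (2 : ZMod e) : ℝ) * e + 2) :=
        Finset.sum_le_sum (fun k₂ _ => by
          have := cnt_bound_dd e k₂ (K - k₂) he
          push_cast at this ⊢
          exact this)
    _ = K * (2 * orderOf (2 : ZMod e) * e + 2) := by
        rw [Finset.sum_const, Nat.card_Icc]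
        push_cast
        ring

lemma fP_expand (P d : ℕ) (hd : d ≠ 0) :
    fP P d = ∑ S ∈ ((Finset.Icc 1 P).filter (fun p => p.Prime ∧ 2 < p)).powerset,
      (∏ p ∈ S, (1 / ((p : ℝ) - 2))) * (if (∏ p ∈ S, p) ∣ d then 1 else 0) := by
  classical
  set PS := (Finset.Icc 1 P).filter (fun p => p.Prime ∧ 2 < p) with hPS
  have hidx : d.primeFactors.filter (fun p => 2 < p ∧ p ≤ P) = PS.filter (fun p => p ∣ d) := by
    ext p
    simp only [Nat.mem_primeFactors, Finset.mem_filter, Finset.mem_Icc, hPS]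
    constructor
    · rintro ⟨⟨pp, pd, -⟩, h2, hP⟩
      exact ⟨⟨⟨pp.pos, hP⟩, pp, h2⟩, pd⟩
    · rintro ⟨⟨⟨h1, hP⟩, pp, h2⟩, pd⟩
      exact ⟨⟨pp, pd, hd⟩, h2, hP⟩
  rw [fP, hidx]
  have hfac : ∀ p ∈ PS.filter (fun p => p ∣ d),
      ((p : ℝ) - 1) / ((p : ℝ) - 2) = (1 / ((p : ℝ) - 2)) + 1 := by
    intro p hp
    simp only [Finset.mem_filter, Finset.mem_Icc, hPS] at hp
    have h3 : 3 ≤ p := hp.1.2.2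
    have : (3 : ℝ) ≤ (p : ℝ) := by exact_mod_cast h3
    have hne : (p : ℝ) - 2 ≠ 0 := by nlinarith
    field_simp
    ring
  rw [Finset.prod_congr rfl hfac]
  rw [Finset.prod_add]
  have hps : (PS.filter (fun p => p ∣ d)).powerset
      = PS.powerset.filter (fun S => (∏ p ∈ S, p) ∣ d) := by
    ext S
    simp only [Finset.mem_powerset, Finset.mem_filter]
    constructor
    · intro hS
      refine ⟨fun p hp => (Finset.mem_filter.mp (hS hp)).1, ?_⟩
      refine Finset.prod_primes_dvd d ?_ ?_
      · intro p hp
        have := Finset.mem_filter.mp (hS hp)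
        have hpp : p.Prime := (Finset.mem_filter.mp this.1).2.1
        exact hpp.prime
      · intro p hp
        exact (Finset.mem_filter.mp (hS hp)).2
    · rintro ⟨hS, hdvd⟩
      intro p hp
      exact Finset.mem_filter.mpr ⟨hS hp, dvd_trans (Finset.dvd_prod_of_mem _ hp) hdvd⟩
  simp only [Finset.prod_const_one, mul_one]
  rw [hps, Finset.sum_filter]
  refine Finset.sum_congr rfl (fun S _ => ?_)
  by_cases h : (∏ p ∈ S, p) ∣ d <;> simp [h]

lemma odd_prod_of_odd_primes (S : Finset ℕ) (h : ∀ p ∈ S, p.Prime ∧ 2 < p) :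
    Odd (∏ p ∈ S, p) := by
  rw [Nat.odd_iff, ← Nat.two_dvd_ne_zero]
  intro hdvd
  obtain ⟨p, hpS, hp2⟩ := (Nat.prime_two.prime.dvd_finset_prod_iff _).mp hdvd
  have hpp := (h p hpS).1
  have h2 := (h p hpS).2
  have h2p : p = 2 := ((Nat.prime_dvd_prime_iff_eq Nat.prime_two hpp).mp hp2).symm
  omega

lemma dd_pos (k₂ h : ℕ) (hk : 1 ≤ k₂) (hh : 1 ≤ h) : dd k₂ h ≠ 0 := by
  have h1 : h + 1 ≤ 2 ^ h := @Nat.lt_two_pow_self h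
  have h2 : 2 ≤ 2 ^ k₂ := by
    calc 2 = 2 ^ 1 := by norm_num
      _ ≤ 2 ^ k₂ := Nat.pow_le_pow_right (by norm_num) hk
  have h3 : 2 * (2 ^ h - 1) ≤ 2 ^ k₂ * (2 ^ h - 1) := Nat.mul_le_mul_right _ h2
  rw [dd]
  omega

set_option maxHeartbeats 2000000 in
theorem average_fP' (P : ℕ) (hP : P.Prime) (hP2 : 2 < P) :
    ∃ C : ℝ, 0 < C ∧ ∃ K₀ : ℕ, ∀ K : ℕ, K₀ ≤ K →
      |(1 / ((IK K).card : ℝ)) * (∑ q ∈ IK K, fP P (dd q.1 q.2))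
        - ∏ p ∈ (Finset.Icc 1 P).filter (fun p => p.Prime ∧ 2 < p),
            (1 + 1 / ((p : ℝ) * ((p : ℝ) - 2)))| ≤ C / (K : ℝ) := by
  classical
  set PS := (Finset.Icc 1 P).filter (fun p => p.Prime ∧ 2 < p) with hPS
  have hPSmem : ∀ p ∈ PS, p.Prime ∧ 2 < p := by
    intro p hp
    exact (Finset.mem_filter.mp hp).2
  set W : Finset ℕ → ℝ := fun S => ∏ p ∈ S, (1 / ((p : ℝ) - 2)) with hW
  have hWpos : ∀ S ∈ PS.powerset, 0 < W S := by
    intro S hS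
    rw [hW]
    refine Finset.prod_pos (fun p hp => ?_)
    have h3 : 3 ≤ p := (hPSmem p (Finset.mem_powerset.mp hS hp)).2
    have h0 : (0:ℝ) < (p:ℝ) - 2 := by
      have : (3:ℝ) ≤ (p:ℝ) := by exact_mod_cast h3
      nlinarith
    positivity
  set C₁ : ℝ := ∑ S ∈ PS.powerset,
      W S * (2 * (orderOf (2 : ZMod (∏ p ∈ S, p)) : ℝ) * ((∏ p ∈ S, p : ℕ) : ℝ) + 8) with hC₁
  have hC₁nonneg : 0 ≤ C₁ := by
    rw [hC₁]
    refine Finset.sum_nonneg (fun S hS => ?_)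
    have := hWpos S hS
    positivity
  refine ⟨8 * C₁ + 1, by positivity, 64, ?_⟩
  intro K hK
  -- basic facts about each S
  have heS : ∀ S ∈ PS.powerset, Odd (∏ p ∈ S, p) :=
    fun S hS => odd_prod_of_odd_primes S (fun p hp => hPSmem p (Finset.mem_powerset.mp hS hp))
  have heS1 : ∀ S ∈ PS.powerset, 1 ≤ (∏ p ∈ S, p) := fun S hS => (heS S hS).pos
  -- Step 1: sum swap
  have hddne : ∀ q ∈ IK K, dd q.1 q.2 ≠ 0 := by
    intro q hq
    rw [IK, Finset.mem_filter, Finset.mem_product, Finset.mem_Icc, Finset.mem_Icc] at hq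
    exact dd_pos q.1 q.2 hq.1.1.1 hq.1.2.1
  have hsum : ∑ q ∈ IK K, fP P (dd q.1 q.2)
      = ∑ S ∈ PS.powerset, W S * (((IK K).filter (fun q => (∏ p ∈ S, p) ∣ dd q.1 q.2)).card : ℝ) := by
    rw [Finset.sum_congr rfl (fun q hq => fP_expand P (dd q.1 q.2) (hddne q hq))]
    rw [Finset.sum_comm]
    refine Finset.sum_congr rfl (fun S _ => ?_)
    rw [Finset.card_filter, ← Finset.mul_sum]
    push_cast
    rfl
  -- Step 2: target expansion
  have htarget : ∏ p ∈ PS, (1 + 1 / ((p : ℝ) * ((p : ℝ) - 2)))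
      = ∑ S ∈ PS.powerset, W S * (1 / ((∏ p ∈ S, p : ℕ) : ℝ)) := by
    have h1 : ∀ p ∈ PS, (1 : ℝ) + 1 / ((p : ℝ) * ((p : ℝ) - 2))
        = (1 / ((p : ℝ) - 2) * (1 / (p : ℝ))) + 1 := by
      intro p hp
      have h3 : 3 ≤ p := (hPSmem p hp).2
      have : (3:ℝ) ≤ (p:ℝ) := by exact_mod_cast h3
      have hne1 : (p:ℝ) ≠ 0 := by nlinarith
      have hne2 : (p:ℝ) - 2 ≠ 0 := by nlinarith
      field_simp
      ring
    rw [Finset.prod_congr rfl h1, Finset.prod_add]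
    simp only [Finset.prod_const_one, mul_one]
    refine Finset.sum_congr rfl (fun S _ => ?_)
    rw [Finset.prod_mul_distrib, hW]
    congr 1
    rw [Nat.cast_prod, one_div, ← Finset.prod_inv_distrib]
    exact Finset.prod_congr rfl (fun p _ => one_div _)
  -- Step 3: Z value
  set Z : ℝ := ∑ k₂ ∈ Finset.Icc 1 K, ((K - k₂ : ℕ) : ℝ) with hZdef
  have hKpos : (0:ℝ) < K := by
    have : (64:ℝ) ≤ K := by exact_mod_cast hK
    linarith
  have hZval : Z * 2 = (K : ℝ) * ((K : ℝ) - 1) := by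
    have h1 : ∑ k₂ ∈ Finset.Icc 1 K, (K - k₂) = ∑ j ∈ Finset.range K, j := by
      refine Finset.sum_nbij' (i := fun k₂ => K - k₂) (j := fun j => K - j) ?_ ?_ ?_ ?_ ?_
      · intro a ha; simp only [Finset.mem_Icc] at ha; simp only [Finset.mem_range]; omega
      · intro a ha; simp only [Finset.mem_range] at ha; simp only [Finset.mem_Icc]; omega
      · intro a ha; simp only [Finset.mem_Icc] at ha; show K - (K - a) = a; omega
      · intro a ha; simp only [Finset.mem_range] at ha; show K - (K - a) = a; omega
      · intro a _; rfl
    have h2 : (∑ j ∈ Finset.range K, j) * 2 = K * (K - 1) := Finset.sum_range_id_mul_two K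
    have h3 : (∑ k₂ ∈ Finset.Icc 1 K, (K - k₂)) * 2 = K * (K - 1) := by rw [h1]; exact h2
    have hK1 : 1 ≤ K := by omega
    have h4 := congrArg (fun n : ℕ => (n : ℝ)) h3
    simp only [Nat.cast_mul, Nat.cast_sum, Nat.cast_ofNat, Nat.cast_sub hK1, Nat.cast_one] at h4
    rw [hZdef]
    exact_mod_cast h4
  -- Step 4: cardinality of IK
  have hIKb : |((IK K).card : ℝ) - Z / 2| ≤ (K:ℝ) * 4 := by
    have h := NS_bound 1 K odd_one
    rw [Finset.filter_true_of_mem (fun q _ => one_dvd _)] at h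
    have ho : orderOf (2 : ZMod 1) = 1 := by
      rw [Subsingleton.elim (2 : ZMod 1) 1]; exact orderOf_one
    rw [ho] at h
    norm_num at h
    rw [hZdef]
    convert h using 3
  have hIKlow : (K:ℝ) * K / 8 ≤ ((IK K).card : ℝ) := by
    have h1 : Z / 2 - (K:ℝ) * 4 ≤ ((IK K).card : ℝ) := by
      have := abs_le.mp hIKb
      linarith [this.1]
    have hKr : (64:ℝ) ≤ K := by exact_mod_cast hK
    nlinarith [hZval]
  have hIKpos : (0:ℝ) < ((IK K).card : ℝ) := by nlinarith
  -- Step 5: per-S bound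
  set R : ℝ := ((IK K).card : ℝ) with hR
  have key : ∀ S ∈ PS.powerset,
      |W S * ((((IK K).filter (fun q => (∏ p ∈ S, p) ∣ dd q.1 q.2)).card : ℝ)
        - R / ((∏ p ∈ S, p : ℕ) : ℝ))|
      ≤ W S * ((K:ℝ) * (2 * (orderOf (2 : ZMod (∏ p ∈ S, p)) : ℝ) * ((∏ p ∈ S, p : ℕ) : ℝ) + 8)) := by
    intro S hS
    set e := ∏ p ∈ S, p with he
    have hodd : Odd e := heS S hS
    have he1 : 1 ≤ e := heS1 S hS
    have her : (1:ℝ) ≤ (e:ℝ) := by exact_mod_cast he1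
    have hepos : (0:ℝ) < (e:ℝ) := by linarith
    have hNb := NS_bound e K hodd
    rw [← hZdef] at hNb
    set N : ℝ := (((IK K).filter (fun q => e ∣ dd q.1 q.2)).card : ℝ) with hN
    set T : ℝ := (orderOf (2 : ZMod e) : ℝ) with hTr
    have hTnn : (0:ℝ) ≤ T := by rw [hTr]; positivity
    have hsplit : |N - R / e| ≤ |N - Z / (2 * e)| + |Z / 2 - R| / e := by
      have hq : N - R / e = (N - Z / (2 * e)) + (Z / 2 - R) / e := by
        field_simp
        ring
      rw [hq]
      calc |(N - Z / (2 * e)) + (Z / 2 - R) / e|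
          ≤ |N - Z / (2 * e)| + |(Z / 2 - R) / e| := abs_add_le _ _
        _ = |N - Z / (2 * e)| + |Z / 2 - R| / e := by
            rw [abs_div, abs_of_pos hepos]
    have hzr : |Z / 2 - R| / e ≤ (K:ℝ) * 4 := by
      have h1 : |Z / 2 - R| ≤ (K:ℝ) * 4 := by
        rw [abs_sub_comm]; exact hIKb
      calc |Z / 2 - R| / e ≤ |Z / 2 - R| / 1 := by
            apply div_le_div_of_nonneg_left (abs_nonneg _) (by norm_num)
            exact her
          _ = |Z / 2 - R| := by norm_num
          _ ≤ (K:ℝ) * 4 := h1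
    have habs : |N - R / e| ≤ (K:ℝ) * (2 * T * e + 2) + (K:ℝ) * 4 := by
      calc |N - R / e| ≤ |N - Z / (2 * e)| + |Z / 2 - R| / e := hsplit
        _ ≤ (K:ℝ) * (2 * T * e + 2) + (K:ℝ) * 4 := add_le_add hNb hzr
    rw [abs_mul, abs_of_pos (hWpos S hS)]
    refine mul_le_mul_of_nonneg_left ?_ (hWpos S hS).le
    calc |N - R / e| ≤ (K:ℝ) * (2 * T * e + 2) + (K:ℝ) * 4 := habs
      _ ≤ (K:ℝ) * (2 * T * e + 8) := by nlinarith
  -- Step 6: global difference bound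
  have hdiff : |(∑ q ∈ IK K, fP P (dd q.1 q.2))
      - (∏ p ∈ PS, (1 + 1 / ((p : ℝ) * ((p : ℝ) - 2)))) * R| ≤ (K:ℝ) * C₁ := by
    rw [hsum, htarget, Finset.sum_mul, ← Finset.sum_sub_distrib]
    have hterm : ∀ S ∈ PS.powerset,
        W S * (((IK K).filter (fun q => (∏ p ∈ S, p) ∣ dd q.1 q.2)).card : ℝ)
          - W S * (1 / ((∏ p ∈ S, p : ℕ) : ℝ)) * R
        = W S * ((((IK K).filter (fun q => (∏ p ∈ S, p) ∣ dd q.1 q.2)).card : ℝ)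
            - R / ((∏ p ∈ S, p : ℕ) : ℝ)) := by
      intro S _
      ring
    rw [Finset.sum_congr rfl hterm]
    calc |∑ S ∈ PS.powerset, W S * ((((IK K).filter (fun q => (∏ p ∈ S, p) ∣ dd q.1 q.2)).card : ℝ)
            - R / ((∏ p ∈ S, p : ℕ) : ℝ))|
        ≤ ∑ S ∈ PS.powerset, |W S * ((((IK K).filter (fun q => (∏ p ∈ S, p) ∣ dd q.1 q.2)).card : ℝ)
            - R / ((∏ p ∈ S, p : ℕ) : ℝ))| := Finset.abs_sum_le_sum_abs _ _
      _ ≤ ∑ S ∈ PS.powerset, W S * ((K:ℝ) * (2 * (orderOf (2 : ZMod (∏ p ∈ S, p)) : ℝ)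
            * ((∏ p ∈ S, p : ℕ) : ℝ) + 8)) := Finset.sum_le_sum key
      _ = (K:ℝ) * C₁ := by
          rw [hC₁, Finset.mul_sum]
          exact Finset.sum_congr rfl (fun S _ => by ring)
  -- Step 7: conclude
  have heq : (1 / R) * (∑ q ∈ IK K, fP P (dd q.1 q.2))
      - (∏ p ∈ PS, (1 + 1 / ((p : ℝ) * ((p : ℝ) - 2))))
      = ((∑ q ∈ IK K, fP P (dd q.1 q.2))
        - (∏ p ∈ PS, (1 + 1 / ((p : ℝ) * ((p : ℝ) - 2)))) * R) / R := by
    field_simp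
  rw [heq, abs_div, abs_of_pos hIKpos]
  rw [div_le_div_iff₀ hIKpos hKpos]
  have h8 : |(∑ q ∈ IK K, fP P (dd q.1 q.2))
      - (∏ p ∈ PS, (1 + 1 / ((p : ℝ) * ((p : ℝ) - 2)))) * R| * K ≤ ((K:ℝ) * C₁) * K :=
    mul_le_mul_of_nonneg_right hdiff hKpos.le
  calc |(∑ q ∈ IK K, fP P (dd q.1 q.2))
      - (∏ p ∈ PS, (1 + 1 / ((p : ℝ) * ((p : ℝ) - 2)))) * R| * K
      ≤ ((K:ℝ) * C₁) * K := h8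
    _ ≤ (8 * C₁ + 1) * R := by nlinarith [hIKlow, hC₁nonneg, hKpos]

end AuxAverageFP

/-- for each fixed prime `P > 2`, as `K → ∞`,
`(1/|I_K|) ∑_{(k₂,h)∈I_K} f_P(d(k₂,h)) = ∏_{2<p≤P} (1 + 1/(p(p-2))) + O_P(1/K)`. -/
theorem average_fP (P : ℕ) (hP : P.Prime) (hP2 : 2 < P) :
    ∃ C : ℝ, 0 < C ∧ ∃ K₀ : ℕ, ∀ K : ℕ, K₀ ≤ K →
      |(1 / ((IK K).card : ℝ)) * (∑ q ∈ IK K, fP P (dd q.1 q.2))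
        - ∏ p ∈ (Finset.Icc 1 P).filter (fun p => p.Prime ∧ 2 < p),
            (1 + 1 / ((p : ℝ) * ((p : ℝ) - 2)))| ≤ C / (K : ℝ) :=
  average_fP' P hP hP2
end
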